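/- arXiv:0805.4547 — 4 statements merged into one kernel-verified Lean document; each statement's English description precedes it below -/
import Mathlib

section
/- Let f ∈ 𝐒(ℝ₊ˣ) and let h : (0,∞) → ℂ be locally integrable with |h(x)| ≤ C x^{a} for x ≥ 1 (some a ≥ 0, C > 0). Then for every s ∈ ℂ with Re(s) < −a, the integrals M(f ∗ h⁻)(s) and ∫₁^∞ h(x) x^s dx/x converge absolutely and M(f ∗ h⁻)(s) = M(f)(s) · ∫₁^∞ h(x) x^s dx/x. -/
open MeasureTheory Set Filter Asymptotics

/-- The Mellin transform `M(g)(s) = ∫₀^∞ g(x) x^s dx/x`. -/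
noncomputable def mellinT (g : ℝ → ℂ) (s : ℂ) : ℂ :=
  ∫ x in Set.Ioi (0:ℝ), g x * (x : ℂ) ^ s / (x : ℂ)

/-- The multiplicative convolution `(f ∗ g)(x) = ∫₀^∞ f(x/y) g(y) dy/y`. -/
noncomputable def mulConv (f g : ℝ → ℂ) (x : ℝ) : ℂ :=
  ∫ y in Set.Ioi (0:ℝ), f (x / y) * g y / (y : ℂ)

/-- The strong Schwartz space `𝐒(ℝ₊ˣ)`: smooth functions on `(0,∞)` such that
`sup_{x>0} |x^m f⁽ⁿ⁾(x)| < ∞` for every `m : ℤ` and `n : ℕ`. -/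
def IsStrongSchwartz (f : ℝ → ℂ) : Prop :=
  ContDiffOn ℝ (⊤ : ℕ∞) f (Set.Ioi 0) ∧
  ∀ (m : ℤ) (n : ℕ), ∃ C : ℝ,
    ∀ x ∈ Set.Ioi (0:ℝ), x ^ m * ‖iteratedDerivWithin n f (Set.Ioi 0) x‖ ≤ C

/-- `L¹_loc,poly(ℝ₊ˣ)`: locally integrable functions on `(0,∞)` with `h(x) = O(x^a)`
as `x → ∞` and `h(x) = O(x^(-a))` as `x → 0⁺` for some `a ≥ 0`. -/
def IsLocPoly (h : ℝ → ℂ) : Prop :=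
  MeasureTheory.LocallyIntegrableOn h (Set.Ioi 0) ∧
  ∃ a : ℝ, 0 ≤ a ∧
    h =O[Filter.atTop] (fun x : ℝ => x ^ a) ∧
    h =O[nhdsWithin 0 (Set.Ioi 0)] (fun x : ℝ => x ^ (-a))

/-- `h⁺(x) = h(x)` for `x < 1`, `0` otherwise. -/
noncomputable def hPlus (h : ℝ → ℂ) (x : ℝ) : ℂ := if x < 1 then h x else 0

/-- `h⁻(x) = h(x)` for `x ≥ 1`, `0` otherwise. -/
noncomputable def hMinus (h : ℝ → ℂ) (x : ℝ) : ℂ := if 1 ≤ x then h x else 0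


private lemma schwartz_decay (f : ℝ → ℂ) (hf : IsStrongSchwartz f) (m : ℤ) :
    ∃ D : ℝ, 0 ≤ D ∧ ∀ x ∈ Set.Ioi (0:ℝ), ‖f x‖ ≤ D * x ^ (-(m:ℝ)) := by
  obtain ⟨D, hD⟩ := hf.2 m 0
  refine ⟨max D 0, le_max_right _ _, fun x hx => ?_⟩
  have hx0 : (0:ℝ) < x := hx
  have h1 := hD x hx
  rw [iteratedDerivWithin_zero] at h1
  have hxm : (0:ℝ) < x ^ m := zpow_pos hx0 m
  have h2 : ‖f x‖ ≤ D * (x ^ m)⁻¹ := by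
    rw [← div_eq_mul_inv, le_div_iff₀ hxm]
    linarith [h1]
  have h3 : x ^ (-(m:ℝ)) = (x ^ m)⁻¹ := by
    rw [← Real.rpow_intCast x m, ← Real.rpow_neg hx0.le]
  rw [h3]
  calc ‖f x‖ ≤ D * (x ^ m)⁻¹ := h2
    _ ≤ max D 0 * (x ^ m)⁻¹ := by
        have := inv_nonneg.mpr hxm.le
        exact mul_le_mul_of_nonneg_right (le_max_left _ _) this

private lemma schwartz_isBigO_atTop (f : ℝ → ℂ) (hf : IsStrongSchwartz f) (r : ℝ) :
    f =O[atTop] fun x : ℝ => x ^ (-r) := by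
  obtain ⟨D, hD0, hD⟩ := schwartz_decay f hf ⌈r⌉
  rw [isBigO_iff]
  refine ⟨D, ?_⟩
  filter_upwards [eventually_ge_atTop (1:ℝ)] with x hx1
  have hx0 : (0:ℝ) < x := lt_of_lt_of_le one_pos hx1
  have h1 : ‖f x‖ ≤ D * x ^ (-(⌈r⌉:ℝ)) := hD x hx0
  have h2 : x ^ (-(⌈r⌉:ℝ)) ≤ x ^ (-r) :=
    Real.rpow_le_rpow_of_exponent_le hx1 (neg_le_neg (Int.le_ceil r))
  have h3 : ‖x ^ (-r)‖ = x ^ (-r) := Real.norm_of_nonneg (Real.rpow_nonneg hx0.le _)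
  rw [h3]
  calc ‖f x‖ ≤ D * x ^ (-(⌈r⌉:ℝ)) := h1
    _ ≤ D * x ^ (-r) := by exact mul_le_mul_of_nonneg_left h2 hD0

private lemma schwartz_isBigO_zero (f : ℝ → ℂ) (hf : IsStrongSchwartz f) (r : ℝ) :
    f =O[nhdsWithin 0 (Set.Ioi 0)] fun x : ℝ => x ^ (-r) := by
  obtain ⟨D, hD0, hD⟩ := schwartz_decay f hf ⌊r⌋
  rw [isBigO_iff]
  refine ⟨D, ?_⟩
  filter_upwards [Ioo_mem_nhdsGT_of_mem (show (0:ℝ) ∈ Ico (0:ℝ) 1 from ⟨le_refl _, one_pos⟩)]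
    with x hx
  have hx0 : (0:ℝ) < x := hx.1
  have h1 : ‖f x‖ ≤ D * x ^ (-(⌊r⌋:ℝ)) := hD x hx0
  have h2 : x ^ (-(⌊r⌋:ℝ)) ≤ x ^ (-r) :=
    Real.rpow_le_rpow_of_exponent_ge hx0 hx.2.le (neg_le_neg (Int.floor_le r))
  have h3 : ‖x ^ (-r)‖ = x ^ (-r) := Real.norm_of_nonneg (Real.rpow_nonneg hx0.le _)
  rw [h3]
  calc ‖f x‖ ≤ D * x ^ (-(⌊r⌋:ℝ)) := h1
    _ ≤ D * x ^ (-r) := mul_le_mul_of_nonneg_left h2 hD0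

private lemma schwartz_mellin_integrable (f : ℝ → ℂ) (hf : IsStrongSchwartz f) (s : ℂ) :
    IntegrableOn (fun t : ℝ => f t * (t:ℂ) ^ (s - 1)) (Set.Ioi 0) := by
  have h1 : MellinConvergent f s :=
    mellinConvergent_of_isBigO_rpow
      (hf.1.continuousOn.locallyIntegrableOn measurableSet_Ioi)
      (schwartz_isBigO_atTop f hf (s.re + 1)) (by linarith)
      (schwartz_isBigO_zero f hf (s.re - 1)) (by linarith)
  exact h1.congr_fun (fun t ht => by simp only [smul_eq_mul]; ring) measurableSet_Ioi

private lemma schwartz_mellin_integrable_norm (f : ℝ → ℂ) (hf : IsStrongSchwartz f) (σ : ℝ) :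
    IntegrableOn (fun t : ℝ => ‖f t‖ * t ^ (σ - 1)) (Set.Ioi 0) := by
  have h1 := (schwartz_mellin_integrable f hf (σ:ℂ)).norm
  refine MeasureTheory.IntegrableOn.congr_fun h1 (fun t ht => ?_) measurableSet_Ioi
  have ht0 : (0:ℝ) < t := ht
  simp only [norm_mul]
  have h2 : ‖(t:ℂ) ^ ((σ:ℂ) - 1)‖ = t ^ (σ - 1) := by
    rw [Complex.norm_cpow_eq_rpow_re_of_pos ht0]
    norm_num
  rw [h2]

private lemma integrableOn_comp_div' {E : Type*} [NormedAddCommGroup E]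
    (ψ : ℝ → E) {y : ℝ} (hy : 0 < y) (h : IntegrableOn ψ (Set.Ioi 0)) :
    IntegrableOn (fun x => ψ (x / y)) (Set.Ioi 0) := by
  have h2 := (integrableOn_Ioi_comp_mul_left_iff ψ 0 (inv_pos.mpr hy)).mpr (by simpa using h)
  exact h2.congr_fun (fun x hx => by rw [div_eq_inv_mul]) measurableSet_Ioi

private lemma integral_comp_div' {E : Type*} [NormedAddCommGroup E] [NormedSpace ℝ E]
    (ψ : ℝ → E) {y : ℝ} (hy : 0 < y) :
    ∫ x in Set.Ioi (0:ℝ), ψ (x / y) = y • ∫ t in Set.Ioi (0:ℝ), ψ t := by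
  have h1 := integral_comp_mul_left_Ioi ψ 0 (inv_pos.mpr hy)
  simp only [mul_zero, inv_inv] at h1
  rw [← h1]
  exact setIntegral_congr_fun measurableSet_Ioi (fun x hx => by rw [div_eq_inv_mul])

/-- for `Re(s) < −a`, `M(f ∗ h⁻)(s) = M(f)(s) · ∫₁^∞ h(x) x^s dx/x`,
all integrals converging absolutely. -/
theorem mellin_mulConv_minus_factorization (f h : ℝ → ℂ) (hf : IsStrongSchwartz f)
    (hloc : MeasureTheory.LocallyIntegrableOn h (Set.Ioi 0))
    (a C : ℝ) (ha : 0 ≤ a) (hC : 0 < C)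
    (hbound : ∀ x : ℝ, 1 ≤ x → ‖h x‖ ≤ C * x ^ a) :
    ∀ s : ℂ, s.re < -a →
      MeasureTheory.IntegrableOn
        (fun x : ℝ => mulConv f (hMinus h) x * (x : ℂ) ^ s / (x : ℂ)) (Set.Ioi 0) ∧
      MeasureTheory.IntegrableOn
        (fun x : ℝ => h x * (x : ℂ) ^ s / (x : ℂ)) (Set.Ici 1) ∧
      mellinT (mulConv f (hMinus h)) s =
        mellinT f s * ∫ x in Set.Ici (1:ℝ), h x * (x : ℂ) ^ s / (x : ℂ) := by
  intro s hs
  have hσ : s.re < -a := hs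
  set σ := s.re with hσdef
  set g : ℝ → ℂ := hMinus h with hgdef
  have Ici_sub : Set.Ici (1:ℝ) ⊆ Set.Ioi 0 := fun x hx => show (0:ℝ) < x from lt_of_lt_of_le one_pos hx
  set μ := volume.restrict (Set.Ioi (0:ℝ)) with hμdef
  have h_meas : AEStronglyMeasurable h μ := hloc.aestronglyMeasurable
  have g_ind : g = Set.indicator (Set.Ici 1) h := by
    funext x
    by_cases hx : (1:ℝ) ≤ x <;> simp [hgdef, hMinus, Set.indicator_apply, hx]
  have g_meas : AEStronglyMeasurable g μ := by
    rw [g_ind]; exact h_meas.indicator measurableSet_Ici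
  have norm_pow : ∀ x : ℝ, 0 < x → ‖(x:ℂ) ^ s / (x:ℂ)‖ = x ^ (σ - 1) := by
    intro x hx
    rw [norm_div, Complex.norm_cpow_eq_rpow_re_of_pos hx,
      Complex.norm_real, Real.norm_of_nonneg hx.le, Real.rpow_sub hx, Real.rpow_one]
  -- Part 2
  have part2 : IntegrableOn (fun x : ℝ => h x * (x:ℂ) ^ s / (x:ℂ)) (Set.Ici 1) := by
    have hm1 : AEStronglyMeasurable h (volume.restrict (Set.Ici 1)) :=
      h_meas.mono_measure (Measure.restrict_mono Ici_sub le_rfl)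
    have hm2 : AEStronglyMeasurable (fun x : ℝ => (x:ℂ) ^ s / (x:ℂ))
        (volume.restrict (Set.Ici 1)) := by
      refine ContinuousOn.aestronglyMeasurable ?_ measurableSet_Ici
      intro x hx
      have hx0 : x ≠ 0 := (lt_of_lt_of_le one_pos hx).ne'
      exact ((Complex.continuousAt_ofReal_cpow_const x s (Or.inr hx0)).continuousWithinAt).div
        Complex.continuous_ofReal.continuousWithinAt (by exact_mod_cast hx0)
    have hm : AEStronglyMeasurable (fun x : ℝ => h x * (x:ℂ) ^ s / (x:ℂ))
        (volume.restrict (Set.Ici 1)) := by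
      refine (hm1.mul hm2).congr (ae_of_all _ fun x => ?_)
      simp only [Pi.mul_apply]
      ring
    refine Integrable.mono' (g := fun x : ℝ => C * x ^ (σ + a - 1)) ?_ hm ?_
    · have hI : IntegrableOn (fun x : ℝ => x ^ (σ + a - 1)) (Set.Ioi 1) :=
        integrableOn_Ioi_rpow_of_lt (by linarith) one_pos
      have hI2 : IntegrableOn (fun x : ℝ => x ^ (σ + a - 1)) (Set.Ici 1) := by
        rwa [integrableOn_Ici_iff_integrableOn_Ioi]
      exact hI2.const_mul C
    · rw [ae_restrict_iff' measurableSet_Ici]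
      refine ae_of_all _ fun x hx => ?_
      have hx1 : (1:ℝ) ≤ x := hx
      have hx0 : (0:ℝ) < x := lt_of_lt_of_le one_pos hx1
      have e1 : ‖h x * (x:ℂ) ^ s / (x:ℂ)‖ = ‖h x‖ * (x ^ (σ - 1)) := by
        rw [mul_div_assoc, norm_mul, norm_pow x hx0]
      rw [e1]
      calc ‖h x‖ * x ^ (σ - 1) ≤ (C * x ^ a) * x ^ (σ - 1) :=
            mul_le_mul_of_nonneg_right (hbound x hx1) (Real.rpow_nonneg hx0.le _)
        _ = C * x ^ (σ + a - 1) := by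
            rw [mul_assoc, ← Real.rpow_add hx0, show a + (σ - 1) = σ + a - 1 by ring]
  have part2norm : IntegrableOn (fun y : ℝ => ‖h y‖ * y ^ (σ - 1)) (Set.Ici 1) := by
    refine MeasureTheory.IntegrableOn.congr_fun part2.norm (fun y hy => ?_) measurableSet_Ici
    rw [mul_div_assoc, norm_mul, norm_pow y (lt_of_lt_of_le one_pos hy)]
  -- Mellin integrability of f
  have hψ : IntegrableOn (fun t : ℝ => f t * (t:ℂ) ^ (s-1)) (Set.Ioi 0) :=
    schwartz_mellin_integrable f hf s
  have hψr : IntegrableOn (fun t : ℝ => ‖f t‖ * t ^ (σ - 1)) (Set.Ioi 0) :=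
    schwartz_mellin_integrable_norm f hf σ
  set T : ℂ := ∫ t in Set.Ioi (0:ℝ), f t * (t:ℂ) ^ (s-1) with hTdef
  set K : ℝ := ∫ t in Set.Ioi (0:ℝ), ‖f t‖ * t ^ (σ - 1) with hKdef
  have cpow_div : ∀ x y : ℝ, 0 < x → 0 < y →
      ((x / y : ℝ) : ℂ) ^ (s - 1) = (x:ℂ) ^ (s-1) / (y:ℂ) ^ (s-1) := by
    intro x y hx hy
    have h1 := Complex.mul_cpow_ofReal_nonneg hx.le (inv_nonneg.mpr hy.le) (s-1)
    rw [div_eq_mul_inv, Complex.ofReal_mul, Complex.ofReal_inv] at *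
    rw [h1, Complex.inv_cpow _ _
      (by rw [Complex.arg_ofReal_of_nonneg hy.le]; exact Real.pi_ne_zero.symm),
      div_eq_mul_inv]
  have key : ∀ y : ℝ, 0 < y → ∀ x : ℝ, 0 < x →
      f (x / y) * (x:ℂ) ^ (s-1) = (y:ℂ) ^ (s-1) * (f (x / y) * ((x / y : ℝ) : ℂ) ^ (s-1)) := by
    intro y hy x hx
    have hy0 : ((y:ℂ)) ^ (s-1) ≠ 0 := by
      intro hzero
      rw [Complex.cpow_eq_zero_iff] at hzero
      exact (Complex.ofReal_ne_zero.mpr hy.ne') hzero.1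
    rw [cpow_div x y hx hy]
    field_simp
  set F : ℝ × ℝ → ℂ := fun p => f (p.2 / p.1) * (p.2:ℂ) ^ (s-1) * (g p.1 / (p.1:ℂ)) with hFdef
  have hsec : ∀ y : ℝ, 0 < y → IntegrableOn (fun x : ℝ => F (y, x)) (Set.Ioi 0) := by
    intro y hy
    have h1 : IntegrableOn (fun x : ℝ => f (x / y) * ((x / y : ℝ) : ℂ) ^ (s-1)) (Set.Ioi 0) :=
      integrableOn_comp_div' (fun t => f t * (t:ℂ) ^ (s-1)) hy hψ
    have h2 := (h1.const_mul ((y:ℂ) ^ (s-1))).mul_const (g y / (y:ℂ))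
    refine MeasureTheory.IntegrableOn.congr_fun h2 (fun x hx => ?_) measurableSet_Ioi
    simp only [hFdef]
    rw [← key y hy x hx]
  have hinner : ∀ y : ℝ, 0 < y →
      (∫ x in Set.Ioi (0:ℝ), F (y, x)) = (y:ℂ) ^ s * T * (g y / (y:ℂ)) := by
    intro y hy
    have hyC : ((y:ℝ):ℂ) ≠ 0 := Complex.ofReal_ne_zero.mpr hy.ne'
    have e0 : (∫ x in Set.Ioi (0:ℝ), F (y, x)) =
        ∫ x in Set.Ioi (0:ℝ), f (x / y) * (x:ℂ) ^ (s-1) * (g y / (y:ℂ)) := rfl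
    rw [e0, integral_mul_const]
    have hcd := integral_comp_div' (fun t : ℝ => f t * (t:ℂ) ^ (s-1)) hy
    calc (∫ x in Set.Ioi (0:ℝ), f (x / y) * (x:ℂ) ^ (s-1)) * (g y / (y:ℂ))
        = (∫ x in Set.Ioi (0:ℝ), (y:ℂ) ^ (s-1) * (f (x / y) * ((x / y : ℝ) : ℂ) ^ (s-1))) *
            (g y / (y:ℂ)) := by
          rw [setIntegral_congr_fun measurableSet_Ioi (fun x hx => key y hy x hx)]
      _ = ((y:ℂ) ^ (s-1) * (y • T)) * (g y / (y:ℂ)) := by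
          rw [integral_const_mul, hcd]
      _ = (y:ℂ) ^ s * T * (g y / (y:ℂ)) := by
          have hys : (y:ℂ) ^ s = (y:ℂ) ^ (s-1) * (y:ℂ) := by
            conv_lhs => rw [show s = s - 1 + 1 by ring]
            rw [Complex.cpow_add _ _ hyC, Complex.cpow_one]
          rw [Complex.real_smul, hys]
          ring
  have hnorm : ∀ y : ℝ, 0 < y →
      (∫ x in Set.Ioi (0:ℝ), ‖F (y, x)‖) = ‖g y‖ * y ^ (σ-1) * K := by
    intro y hy
    have hyr : (0:ℝ) < y ^ (σ-1) := Real.rpow_pos_of_pos hy _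
    have e : ∀ x ∈ Set.Ioi (0:ℝ), ‖F (y, x)‖ =
        (‖f (x / y)‖ * (x / y) ^ (σ-1)) * (y ^ (σ-1) * (‖g y‖ / y)) := by
      intro x hx
      have hx0 : (0:ℝ) < x := hx
      have e1 : ‖(x:ℂ) ^ (s-1)‖ = x ^ (σ-1) := by
        rw [Complex.norm_cpow_eq_rpow_re_of_pos hx0]
        norm_num
        rfl
      have e2 : ‖g y / (y:ℂ)‖ = ‖g y‖ / y := by
        rw [norm_div, Complex.norm_real, Real.norm_of_nonneg hy.le]
      show ‖f (x / y) * (x:ℂ) ^ (s-1) * (g y / (y:ℂ))‖ = _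
      rw [norm_mul, norm_mul, e1, e2, Real.div_rpow hx0.le hy.le]
      field_simp
    rw [setIntegral_congr_fun measurableSet_Ioi e, integral_mul_const]
    have hcd := integral_comp_div' (fun t : ℝ => ‖f t‖ * t ^ (σ-1)) hy
    rw [← hKdef] at hcd
    rw [hcd, smul_eq_mul]
    field_simp
  have hFmeas : AEStronglyMeasurable F (μ.prod μ) := by
    have hA : AEStronglyMeasurable (fun p : ℝ × ℝ => f (p.2 / p.1) * (p.2:ℂ) ^ (s-1))
        (μ.prod μ) := by
      rw [hμdef, Measure.prod_restrict]
      refine ContinuousOn.aestronglyMeasurable ?_ (measurableSet_Ioi.prod measurableSet_Ioi)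
      have hdiv : ContinuousOn (fun p : ℝ × ℝ => p.2 / p.1) (Set.Ioi 0 ×ˢ Set.Ioi 0) :=
        continuous_snd.continuousOn.div continuous_fst.continuousOn
          (fun p hp => (ne_of_gt (Set.mem_prod.mp hp).1))
      refine ContinuousOn.mul ?_ ?_
      · refine hf.1.continuousOn.comp hdiv ?_
        intro p hp
        exact div_pos (Set.mem_Ioi.mp (Set.mem_prod.mp hp).2) (Set.mem_Ioi.mp (Set.mem_prod.mp hp).1)
      · have hc : ContinuousOn (fun x : ℝ => (x:ℂ) ^ (s-1)) (Set.Ioi 0) := fun x hx =>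
          (Complex.continuousAt_ofReal_cpow_const x _ (Or.inr (ne_of_gt hx))).continuousWithinAt
        exact hc.comp continuous_snd.continuousOn (fun p hp => (Set.mem_prod.mp hp).2)
    have hB : AEStronglyMeasurable (fun p : ℝ × ℝ => g p.1 / (p.1:ℂ)) (μ.prod μ) := by
      have hb : AEStronglyMeasurable (fun y : ℝ => g y / (y:ℂ)) μ := by
        have h2 : AEStronglyMeasurable (fun y : ℝ => ((y:ℂ))⁻¹) μ :=
          (Complex.measurable_ofReal.inv).aestronglyMeasurable
        exact (g_meas.mul h2).congr (ae_of_all _ fun y => (div_eq_mul_inv _ _).symm)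
      exact hb.comp_fst
    exact hA.mul hB
  have hF : Integrable F (μ.prod μ) := by
    rw [integrable_prod_iff hFmeas]
    constructor
    · rw [hμdef, ae_restrict_iff' measurableSet_Ioi]
      exact ae_of_all _ fun y hy => hsec y hy
    · have h1 : IntegrableOn (fun y : ℝ => ‖h y‖ * y ^ (σ-1)) (Set.Ici 1) volume := part2norm
      have h2 : Integrable (Set.indicator (Set.Ici 1) (fun y : ℝ => ‖h y‖ * y ^ (σ-1))) μ := by
        rw [hμdef, integrable_indicator_iff measurableSet_Ici, IntegrableOn,
          Measure.restrict_restrict measurableSet_Ici, Set.inter_eq_left.mpr Ici_sub]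
        exact h1
      have h3 : (fun y : ℝ => ‖g y‖ * y ^ (σ-1)) =
          Set.indicator (Set.Ici 1) (fun y : ℝ => ‖h y‖ * y ^ (σ-1)) := by
        funext y
        by_cases hy : (1:ℝ) ≤ y <;>
          simp [hgdef, hMinus, Set.indicator_apply, hy]
      have hW : Integrable (fun y : ℝ => ‖g y‖ * y ^ (σ-1) * K) μ :=
        (h3 ▸ h2).mul_const K
      refine hW.congr ?_
      have hae : ∀ᵐ y ∂μ, ‖g y‖ * y ^ (σ-1) * K = ∫ x in Set.Ioi (0:ℝ), ‖F (y, x)‖ := by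
        rw [hμdef]
        exact (ae_restrict_iff' measurableSet_Ioi).mpr
          (ae_of_all _ fun y hy => (hnorm y hy).symm)
      exact hae
  have hx_eq : ∀ x : ℝ, 0 < x → (x:ℂ) ^ s / (x:ℂ) = (x:ℂ) ^ (s-1) := by
    intro x hx
    rw [Complex.cpow_sub _ _ (Complex.ofReal_ne_zero.mpr (ne_of_gt hx)), Complex.cpow_one]
  have outer_eq : ∀ x : ℝ, 0 < x →
      mulConv f g x * (x:ℂ) ^ s / (x:ℂ) = ∫ y in Set.Ioi (0:ℝ), F (y, x) := by
    intro x hx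
    rw [mul_div_assoc, hx_eq x hx]
    simp only [mulConv]
    rw [← integral_mul_const]
    refine setIntegral_congr_fun measurableSet_Ioi fun y hy => ?_
    simp only [hFdef]
    ring
  have hT_eq : mellinT f s = T := by
    simp only [mellinT]
    exact setIntegral_congr_fun measurableSet_Ioi fun t ht => by
      rw [mul_div_assoc, hx_eq t ht]
  have hswap : (∫ x in Set.Ioi (0:ℝ), ∫ y in Set.Ioi (0:ℝ), F (y, x)) =
      ∫ y in Set.Ioi (0:ℝ), ∫ x in Set.Ioi (0:ℝ), F (y, x) :=
    (MeasureTheory.integral_integral_swap (f := fun y x => F (y, x)) hF).symm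
  have step1 : mellinT (mulConv f g) s = ∫ x in Set.Ioi (0:ℝ), ∫ y in Set.Ioi (0:ℝ), F (y, x) := by
    simp only [mellinT]
    exact setIntegral_congr_fun measurableSet_Ioi fun x hx => outer_eq x hx
  have step2 : (∫ y in Set.Ioi (0:ℝ), ∫ x in Set.Ioi (0:ℝ), F (y, x)) =
      ∫ y in Set.Ioi (0:ℝ), T * (g y * (y:ℂ) ^ s / (y:ℂ)) := by
    refine setIntegral_congr_fun measurableSet_Ioi fun y hy => ?_
    rw [hinner y hy]
    ring
  have step3 : (∫ y in Set.Ioi (0:ℝ), T * (g y * (y:ℂ) ^ s / (y:ℂ))) =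
      T * ∫ y in Set.Ici (1:ℝ), h y * (y:ℂ) ^ s / (y:ℂ) := by
    rw [integral_const_mul]
    congr 1
    have e : ∀ y : ℝ, g y * (y:ℂ) ^ s / (y:ℂ) =
        Set.indicator (Set.Ici 1) (fun y : ℝ => h y * (y:ℂ) ^ s / (y:ℂ)) y := by
      intro y
      by_cases hy : (1:ℝ) ≤ y <;> simp [hgdef, hMinus, Set.indicator_apply, hy]
    rw [setIntegral_congr_fun measurableSet_Ioi (fun y _ => e y),
      setIntegral_indicator measurableSet_Ici, Set.inter_eq_right.mpr Ici_sub]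
  refine ⟨?_, part2, ?_⟩
  · have h1 : Integrable (fun x : ℝ => ∫ y in Set.Ioi (0:ℝ), F (y, x)) μ := by
      have := hF.integral_prod_right
      exact this
    refine MeasureTheory.Integrable.congr h1 ?_
    have hae : ∀ᵐ x ∂μ, (∫ y in Set.Ioi (0:ℝ), F (y, x)) = mulConv f g x * (x:ℂ) ^ s / (x:ℂ) := by
      rw [hμdef]
      exact (ae_restrict_iff' measurableSet_Ioi).mpr
        (ae_of_all _ fun x hx => (outer_eq x hx).symm)
    exact hae
  · rw [step1, hswap, step2, step3, hT_eq]
end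

section
/- Let h : (0,∞) → ℂ be locally integrable with |h(x)| ≤ C x^{a} for x ≥ 1 and |h(x)| ≤ C x^{−a} for 0 < x < 1 (some a ≥ 0, C > 0), and suppose f ∗ h = 0 identically for some f ∈ 𝐒(ℝ₊ˣ) not identically zero. Then there exists a meromorphic function Φ on ℂ such that Φ(s) = ∫₀¹ h(x) x^s dx/x for every s with Re(s) > a, and Φ(s) = −∫₁^∞ h(x) x^s dx/x for every s with Re(s) < −a. (Mean-periodicity implies the meromorphic continuation of the half Mellin transform of h.) -/
open MeasureTheory Set Filter Asymptotics

open Complex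

lemma aux_zpow_bound {f : ℝ → ℂ} {m : ℤ} {C : ℝ}
    (h : ∀ x ∈ Set.Ioi (0:ℝ), x ^ (-m) * ‖f x‖ ≤ C) {x : ℝ} (hx : 0 < x) :
    ‖f x‖ ≤ C * x ^ (m : ℝ) := by
  have h' := h x hx
  rw [zpow_neg] at h'
  have hxm : (0:ℝ) < x ^ m := zpow_pos hx m
  rw [Real.rpow_intCast x m]
  have : ‖f x‖ = ((x ^ m)⁻¹ * ‖f x‖) * x ^ m := by field_simp
  rw [this]
  exact mul_le_mul_of_nonneg_right h' hxm.le

lemma aux_fbound {f : ℝ → ℂ} (hf : IsStrongSchwartz f) (r : ℝ) :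
    ∃ C : ℝ, 0 ≤ C ∧ ∀ x ∈ Set.Ioi (0:ℝ), ‖f x‖ ≤ C * x ^ r := by
  obtain ⟨C₁, h₁⟩ := hf.2 (-⌊r⌋) 0
  obtain ⟨C₂, h₂⟩ := hf.2 (-⌈r⌉) 0
  simp only [iteratedDerivWithin_zero] at h₁ h₂
  have hC₁ : 0 ≤ C₁ := le_trans (by positivity) (h₁ 1 (by simp))
  have hC₂ : 0 ≤ C₂ := le_trans (by positivity) (h₂ 1 (by simp))
  refine ⟨max C₁ C₂, le_trans hC₁ (le_max_left _ _), fun x hx => ?_⟩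
  have hx' : (0:ℝ) < x := hx
  rcases le_total 1 x with h1x | h1x
  · calc ‖f x‖ ≤ C₁ * x ^ ((⌊r⌋ : ℤ) : ℝ) := aux_zpow_bound h₁ hx'
    _ ≤ max C₁ C₂ * x ^ r := by
        have : x ^ ((⌊r⌋ : ℤ) : ℝ) ≤ x ^ r :=
          Real.rpow_le_rpow_of_exponent_le h1x (by exact_mod_cast Int.floor_le r)
        have hxr : (0:ℝ) ≤ x ^ ((⌊r⌋:ℤ) : ℝ) := (Real.rpow_pos_of_pos hx' _).le
        nlinarith [Real.rpow_pos_of_pos hx' r, le_max_left C₁ C₂]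
  · calc ‖f x‖ ≤ C₂ * x ^ ((⌈r⌉ : ℤ) : ℝ) := aux_zpow_bound h₂ hx'
    _ ≤ max C₁ C₂ * x ^ r := by
        have : x ^ ((⌈r⌉ : ℤ) : ℝ) ≤ x ^ r :=
          Real.rpow_le_rpow_of_exponent_ge hx' h1x (by exact_mod_cast Int.le_ceil r)
        have hxr : (0:ℝ) ≤ x ^ ((⌈r⌉:ℤ) : ℝ) := (Real.rpow_pos_of_pos hx' _).le
        nlinarith [Real.rpow_pos_of_pos hx' r, le_max_right C₁ C₂]

lemma aux_fO_top {f : ℝ → ℂ} (hf : IsStrongSchwartz f) (A : ℝ) :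
    f =O[atTop] (fun x : ℝ => x ^ (-A)) := by
  obtain ⟨c, hc0, hc⟩ := aux_fbound hf (-A)
  refine IsBigO.of_bound c ?_
  filter_upwards [eventually_ge_atTop (1:ℝ)] with x hx
  have hx0 : (0:ℝ) < x := lt_of_lt_of_le one_pos hx
  have := hc x hx0
  rwa [Real.norm_rpow_of_nonneg hx0.le, Real.norm_of_nonneg hx0.le]

lemma aux_fO_bot {f : ℝ → ℂ} (hf : IsStrongSchwartz f) (b : ℝ) :
    f =O[nhdsWithin 0 (Set.Ioi 0)] (fun x : ℝ => x ^ (-b)) := by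
  obtain ⟨c, hc0, hc⟩ := aux_fbound hf (-b)
  refine IsBigO.of_bound c ?_
  filter_upwards [self_mem_nhdsWithin] with x (hx : (0:ℝ) < x)
  have := hc x hx
  rwa [Real.norm_rpow_of_nonneg hx.le, Real.norm_of_nonneg hx.le]

lemma aux_f_loc {f : ℝ → ℂ} (hf : IsStrongSchwartz f) :
    LocallyIntegrableOn f (Set.Ioi 0) :=
  (hf.1.continuousOn).locallyIntegrableOn measurableSet_Ioi

lemma aux_f_conv {f : ℝ → ℂ} (hf : IsStrongSchwartz f) (s : ℂ) :
    MellinConvergent f s :=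
  mellinConvergent_of_isBigO_rpow (aux_f_loc hf) (aux_fO_top hf (s.re + 1))
    (lt_add_one _) (aux_fO_bot hf (s.re - 1)) (sub_one_lt _)

lemma aux_f_diff {f : ℝ → ℂ} (hf : IsStrongSchwartz f) (s : ℂ) :
    DifferentiableAt ℂ (mellin f) s :=
  mellin_differentiableAt_of_isBigO_rpow (aux_f_loc hf) (aux_fO_top hf (s.re + 1))
    (lt_add_one _) (aux_fO_bot hf (s.re - 1)) (sub_one_lt _)

lemma aux_scale_c (f : ℝ → ℂ) (s : ℂ) {y : ℝ} (hy : 0 < y) :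
    ∫ x in Set.Ioi (0:ℝ), (x:ℂ) ^ (s-1) * f (x/y) = (y:ℂ) ^ s * mellin f s := by
  have key := MeasureTheory.integral_comp_mul_left_Ioi
    (fun x : ℝ => (x:ℂ) ^ (s-1) * f (x/y)) 0 hy
  rw [mul_zero] at key
  have hcongr : ∫ t in Set.Ioi (0:ℝ), ((y * t : ℝ) : ℂ) ^ (s-1) * f ((y * t)/y)
      = ∫ t in Set.Ioi (0:ℝ), (y:ℂ) ^ (s-1) * ((t:ℂ) ^ (s-1) * f t) := by
    refine setIntegral_congr_fun measurableSet_Ioi fun t ht => ?_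
    have ht' : (0:ℝ) < t := ht
    rw [mul_div_cancel_left₀ _ hy.ne', Complex.ofReal_mul,
      mul_cpow_ofReal_nonneg hy.le ht'.le, mul_assoc]
  rw [hcongr, integral_const_mul] at key
  -- key : y^(s-1) * ∫ t^(s-1) * f t = y⁻¹ • ∫ x in Ioi 0, x^(s-1) * f (x/y)
  have hmf : mellin f s = ∫ t in Set.Ioi (0:ℝ), (t:ℂ) ^ (s-1) * f t := by
    simp [mellin, smul_eq_mul]
  have hy' : (y:ℂ) ≠ 0 := Complex.ofReal_ne_zero.mpr hy.ne'
  have hys : (y:ℂ) ^ s = (y:ℂ) ^ (s-1) * y := by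
    rw [Complex.cpow_sub _ _ hy', Complex.cpow_one]; field_simp
  rw [← hmf, eq_comm, inv_smul_eq_iff₀ hy.ne'] at key
  rw [key, hys, real_smul]; ring

lemma aux_scale_r (F : ℝ → ℝ) (σ : ℝ) {y : ℝ} (hy : 0 < y) :
    ∫ x in Set.Ioi (0:ℝ), x ^ (σ-1) * F (x/y)
      = y ^ σ * ∫ t in Set.Ioi (0:ℝ), t ^ (σ-1) * F t := by
  have key := MeasureTheory.integral_comp_mul_left_Ioi
    (fun x : ℝ => x ^ (σ-1) * F (x/y)) 0 hy
  rw [mul_zero] at key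
  have hcongr : ∫ t in Set.Ioi (0:ℝ), ((y * t : ℝ)) ^ (σ-1) * F ((y * t)/y)
      = ∫ t in Set.Ioi (0:ℝ), y ^ (σ-1) * (t ^ (σ-1) * F t) := by
    refine setIntegral_congr_fun measurableSet_Ioi fun t ht => ?_
    have ht' : (0:ℝ) < t := ht
    rw [mul_div_cancel_left₀ _ hy.ne', Real.mul_rpow hy.le ht'.le, mul_assoc]
  rw [hcongr, integral_const_mul, smul_eq_mul] at key
  have hys : y ^ σ = y ^ (σ-1) * y := by
    rw [Real.rpow_sub hy, Real.rpow_one]; field_simp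
  rw [eq_comm, inv_mul_eq_iff_eq_mul₀ hy.ne'] at key
  rw [key, hys]; ring


lemma aux_G_aesm (f k : ℝ → ℂ) (s : ℂ)
    (hfc : ContinuousOn f (Set.Ioi 0))
    (hk : AEStronglyMeasurable k (volume.restrict (Set.Ioi 0))) :
    AEStronglyMeasurable (fun p : ℝ × ℝ => (p.1:ℂ) ^ (s-1) * (f (p.1/p.2) * k p.2 / (p.2:ℂ)))
      ((volume.restrict (Set.Ioi 0)).prod (volume.restrict (Set.Ioi 0))) := by
  have hprod : (volume.restrict (Set.Ioi (0:ℝ))).prod (volume.restrict (Set.Ioi (0:ℝ)))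
      = (volume : Measure (ℝ × ℝ)).restrict (Set.Ioi 0 ×ˢ Set.Ioi 0) := by
    rw [Measure.volume_eq_prod, Measure.prod_restrict]
  have hdiv : ContinuousOn (fun p : ℝ × ℝ => p.1 / p.2) (Set.Ioi 0 ×ˢ Set.Ioi 0) :=
    continuousOn_fst.div continuousOn_snd (fun p hp => ne_of_gt hp.2)
  have hmaps : MapsTo (fun p : ℝ × ℝ => p.1/p.2) (Set.Ioi 0 ×ˢ Set.Ioi 0) (Set.Ioi 0) :=
    fun p hp => Set.mem_Ioi.mpr (div_pos hp.1 hp.2)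
  have c2 : ContinuousOn (fun p : ℝ × ℝ => f (p.1/p.2)) (Set.Ioi 0 ×ˢ Set.Ioi 0) :=
    hfc.comp hdiv hmaps
  have c1 : ContinuousOn (fun p : ℝ × ℝ => (p.1:ℂ) ^ (s-1)) (Set.Ioi 0 ×ˢ Set.Ioi 0) := by
    intro p hp
    exact ((continuousAt_ofReal_cpow_const _ _ (Or.inr (ne_of_gt hp.1))).comp
      continuousAt_fst).continuousWithinAt
  have c12 : AEStronglyMeasurable (fun p : ℝ × ℝ => (p.1:ℂ) ^ (s-1) * f (p.1/p.2))
      ((volume.restrict (Set.Ioi 0)).prod (volume.restrict (Set.Ioi 0))) := by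
    rw [hprod]
    exact (c1.mul c2).aestronglyMeasurable (measurableSet_Ioi.prod measurableSet_Ioi)
  have c3 : AEStronglyMeasurable (fun p : ℝ × ℝ => k p.2)
      ((volume.restrict (Set.Ioi 0)).prod (volume.restrict (Set.Ioi 0))) := hk.comp_snd
  have c4 : AEStronglyMeasurable (fun p : ℝ × ℝ => (p.2 : ℂ))
      ((volume.restrict (Set.Ioi 0)).prod (volume.restrict (Set.Ioi 0))) :=
    (Complex.continuous_ofReal.comp continuous_snd).aestronglyMeasurable
  have c4' : AEStronglyMeasurable (fun p : ℝ × ℝ => ((p.2 : ℂ))⁻¹)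
      ((volume.restrict (Set.Ioi 0)).prod (volume.restrict (Set.Ioi 0))) :=
    ((Complex.measurable_ofReal.comp measurable_snd).inv).aestronglyMeasurable
  have := c12.mul (c3.mul c4')
  refine this.congr (Eventually.of_forall fun p => ?_)
  simp only [Pi.mul_apply]
  rw [div_eq_mul_inv]
  ring

lemma aux_G_integrable (f k : ℝ → ℂ) (s : ℂ)
    (hfc : ContinuousOn f (Set.Ioi 0))
    (hk : AEStronglyMeasurable k (volume.restrict (Set.Ioi 0)))
    (hfI : MellinConvergent f s)
    (hkI : MellinConvergent k s) :
    Integrable (fun p : ℝ × ℝ => (p.1:ℂ) ^ (s-1) * (f (p.1/p.2) * k p.2 / (p.2:ℂ)))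
      ((volume.restrict (Set.Ioi 0)).prod (volume.restrict (Set.Ioi 0))) := by
  rw [integrable_prod_iff' (aux_G_aesm f k s hfc hk)]
  constructor
  · refine (ae_restrict_iff' (measurableSet_Ioi (a := (0:ℝ)))).mpr
      (Eventually.of_forall fun y hy => ?_)
    have hy' : (0:ℝ) < y := hy
    have h1 : MellinConvergent (fun t => f (y⁻¹ * t)) s :=
      (MellinConvergent.comp_mul_left (inv_pos.mpr hy')).mpr hfI
    have h2 : Integrable (fun x : ℝ => (k y / (y:ℂ)) * ((x:ℂ) ^ (s-1) • f (y⁻¹ * x)))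
        (volume.restrict (Set.Ioi (0:ℝ))) := h1.const_mul _
    refine h2.congr (Eventually.of_forall fun x => ?_)
    simp only [smul_eq_mul, div_eq_inv_mul]
    ring
  · -- integrability of y ↦ ∫ x, ‖G (x,y)‖
    set If : ℝ := ∫ t in Set.Ioi (0:ℝ), t ^ (s.re - 1) * ‖f t‖ with hIf
    have hval : ∀ y ∈ Set.Ioi (0:ℝ),
        (∫ x in Set.Ioi (0:ℝ), ‖(x:ℂ) ^ (s-1) * (f (x/y) * k y / (y:ℂ))‖)
          = (‖k y‖ / y) * (y ^ s.re * If) := by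
      intro y hy
      have hy' : (0:ℝ) < y := hy
      have hnorm : ∀ x ∈ Set.Ioi (0:ℝ),
          ‖(x:ℂ) ^ (s-1) * (f (x/y) * k y / (y:ℂ))‖
            = (‖k y‖ / y) * (x ^ (s.re - 1) * ‖f (x/y)‖) := by
        intro x hx
        have hx' : (0:ℝ) < x := hx
        rw [norm_mul, norm_div, norm_mul, Complex.norm_real, Real.norm_of_nonneg hy'.le]
        rw [Complex.norm_cpow_eq_rpow_re_of_pos hx']
        have : (s - 1).re = s.re - 1 := by simp
        rw [this]
        ring
      rw [setIntegral_congr_fun measurableSet_Ioi hnorm, integral_const_mul,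
        aux_scale_r (fun t => ‖f t‖) s.re hy']
    have hkn : Integrable (fun y : ℝ => If * ‖(y:ℂ) ^ (s-1) • k y‖)
        (volume.restrict (Set.Ioi (0:ℝ))) := hkI.norm.const_mul If
    refine hkn.congr ?_
    refine (ae_restrict_iff' (measurableSet_Ioi (a := (0:ℝ)))).mpr
      (Eventually.of_forall fun y hy => ?_)
    have hy' : (0:ℝ) < y := hy
    show If * ‖(y:ℂ) ^ (s-1) • k y‖
      = ∫ x in Set.Ioi (0:ℝ), ‖(x:ℂ) ^ (s-1) * (f (x/y) * k y / (y:ℂ))‖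
    rw [hval y hy]
    rw [norm_smul, Complex.norm_cpow_eq_rpow_re_of_pos hy']
    have : (s - 1).re = s.re - 1 := by simp
    rw [this, Real.rpow_sub hy', Real.rpow_one]
    field_simp

lemma mellin_mulConv (f k : ℝ → ℂ) (s : ℂ)
    (hfc : ContinuousOn f (Set.Ioi 0))
    (hk : AEStronglyMeasurable k (volume.restrict (Set.Ioi 0)))
    (hfI : MellinConvergent f s)
    (hkI : MellinConvergent k s) :
    mellin (fun x => mulConv f k x) s = mellin f s * mellin k s := by
  have hGint := aux_G_integrable f k s hfc hk hfI hkI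
  have step1 : mellin (fun x => mulConv f k x) s
      = ∫ x in Set.Ioi (0:ℝ), ∫ y in Set.Ioi (0:ℝ),
          (x:ℂ) ^ (s-1) * (f (x/y) * k y / (y:ℂ)) := by
    rw [mellin]
    refine integral_congr_ae (Eventually.of_forall fun x => ?_)
    show (x:ℂ) ^ (s-1) • mulConv f k x = ∫ y in Set.Ioi (0:ℝ), (x:ℂ) ^ (s-1) * (f (x/y) * k y / (y:ℂ))
    rw [smul_eq_mul, mulConv, ← integral_const_mul]
  have step2 : (∫ x in Set.Ioi (0:ℝ), ∫ y in Set.Ioi (0:ℝ),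
          (x:ℂ) ^ (s-1) * (f (x/y) * k y / (y:ℂ)))
      = ∫ y in Set.Ioi (0:ℝ), ∫ x in Set.Ioi (0:ℝ),
          (x:ℂ) ^ (s-1) * (f (x/y) * k y / (y:ℂ)) :=
    integral_integral_swap hGint
  have step3 : (∫ y in Set.Ioi (0:ℝ), ∫ x in Set.Ioi (0:ℝ),
          (x:ℂ) ^ (s-1) * (f (x/y) * k y / (y:ℂ)))
      = ∫ y in Set.Ioi (0:ℝ), mellin f s * ((y:ℂ) ^ (s-1) * k y) := by
    refine setIntegral_congr_fun measurableSet_Ioi fun y hy => ?_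
    have hy' : (0:ℝ) < y := hy
    have hy'' : (y:ℂ) ≠ 0 := Complex.ofReal_ne_zero.mpr hy'.ne'
    have inner : (∫ x in Set.Ioi (0:ℝ), (x:ℂ) ^ (s-1) * (f (x/y) * k y / (y:ℂ)))
        = (k y / (y:ℂ)) * ∫ x in Set.Ioi (0:ℝ), (x:ℂ) ^ (s-1) * f (x/y) := by
      rw [← integral_const_mul]
      refine setIntegral_congr_fun measurableSet_Ioi fun x hx => ?_
      ring
    rw [inner, aux_scale_c f s hy']
    rw [Complex.cpow_sub _ _ hy'', Complex.cpow_one]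
    field_simp
  rw [step1, step2, step3, integral_const_mul]
  simp only [mellin, smul_eq_mul]


lemma hPlus_eq (h : ℝ → ℂ) : hPlus h = (Set.Iio 1).indicator h := by
  funext x; by_cases hx : x < 1 <;> simp [hPlus, Set.indicator, hx]

lemma hMinus_eq (h : ℝ → ℂ) : hMinus h = (Set.Ici 1).indicator h := by
  funext x; by_cases hx : (1:ℝ) ≤ x <;> simp [hMinus, Set.indicator, hx]

lemma aux_locInt_indicator {h : ℝ → ℂ} (hloc : LocallyIntegrableOn h (Set.Ioi 0))
    {t : Set ℝ} (ht : MeasurableSet t) :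
    LocallyIntegrableOn (t.indicator h) (Set.Ioi 0) := by
  intro x hx
  obtain ⟨U, hU, hint⟩ := hloc x hx
  exact ⟨U, hU, Integrable.mono hint (hint.aestronglyMeasurable.indicator ht)
    (Eventually.of_forall fun y => norm_indicator_le_norm_self h y)⟩

lemma aux_aesm_indicator {h : ℝ → ℂ} (hloc : LocallyIntegrableOn h (Set.Ioi 0))
    {t : Set ℝ} (ht : MeasurableSet t) :
    AEStronglyMeasurable (t.indicator h) (volume.restrict (Set.Ioi 0)) :=
  (hloc.aestronglyMeasurable).indicator ht

section hbounds
variable {h : ℝ → ℂ} {a C : ℝ}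

lemma hPlus_O_top (h : ℝ → ℂ) (A : ℝ) : (hPlus h) =O[atTop] (fun x : ℝ => x ^ (-A)) := by
  refine IsBigO.of_bound 0 ?_
  filter_upwards [eventually_ge_atTop (1:ℝ)] with x hx
  simp [hPlus, not_lt.mpr hx]

lemma hMinus_O_bot (h : ℝ → ℂ) (b : ℝ) :
    (hMinus h) =O[nhdsWithin 0 (Set.Ioi 0)] (fun x : ℝ => x ^ (-b)) := by
  refine IsBigO.of_bound 0 ?_
  filter_upwards [Ioo_mem_nhdsGT_of_mem (Set.left_mem_Ico.mpr zero_lt_one)] with x hx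
  simp [hMinus, not_le.mpr hx.2]

lemma hPlus_O_bot (hC : 0 < C) (hb0 : ∀ x : ℝ, 0 < x → x < 1 → ‖h x‖ ≤ C * x ^ (-a)) :
    (hPlus h) =O[nhdsWithin 0 (Set.Ioi 0)] (fun x : ℝ => x ^ (-a)) := by
  refine IsBigO.of_bound C ?_
  filter_upwards [Ioo_mem_nhdsGT_of_mem (Set.left_mem_Ico.mpr zero_lt_one)] with x hx
  rw [Real.norm_rpow_of_nonneg hx.1.le, Real.norm_of_nonneg hx.1.le]
  simpa [hPlus, hx.2] using hb0 x hx.1 hx.2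

lemma hMinus_O_top (hC : 0 < C) (hb1 : ∀ x : ℝ, 1 ≤ x → ‖h x‖ ≤ C * x ^ a) :
    (hMinus h) =O[atTop] (fun x : ℝ => x ^ (-(-a))) := by
  refine IsBigO.of_bound C ?_
  filter_upwards [eventually_ge_atTop (1:ℝ)] with x hx
  have hx0 : (0:ℝ) < x := lt_of_lt_of_le one_pos hx
  rw [neg_neg, Real.norm_rpow_of_nonneg hx0.le, Real.norm_of_nonneg hx0.le]
  simpa [hMinus, hx] using hb1 x hx

lemma hPlus_mellinConvergent (hloc : LocallyIntegrableOn h (Set.Ioi 0)) (hC : 0 < C)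
    (hb0 : ∀ x : ℝ, 0 < x → x < 1 → ‖h x‖ ≤ C * x ^ (-a)) {s : ℂ} (hs : a < s.re) :
    MellinConvergent (hPlus h) s := by
  rw [hPlus_eq]
  exact mellinConvergent_of_isBigO_rpow (aux_locInt_indicator hloc measurableSet_Iio)
    (by rw [← hPlus_eq]; exact hPlus_O_top h (s.re + 1)) (lt_add_one _)
    (by rw [← hPlus_eq]; exact hPlus_O_bot hC hb0) hs

lemma hMinus_mellinConvergent (hloc : LocallyIntegrableOn h (Set.Ioi 0)) (hC : 0 < C)
    (hb1 : ∀ x : ℝ, 1 ≤ x → ‖h x‖ ≤ C * x ^ a) {s : ℂ} (hs : s.re < -a) :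
    MellinConvergent (hMinus h) s := by
  rw [hMinus_eq]
  exact mellinConvergent_of_isBigO_rpow (aux_locInt_indicator hloc measurableSet_Ici)
    (by rw [← hMinus_eq]; exact hMinus_O_top hC hb1) hs
    (by rw [← hMinus_eq]; exact hMinus_O_bot h (s.re - 1)) (sub_one_lt _)

lemma hPlus_mellin_diff (hloc : LocallyIntegrableOn h (Set.Ioi 0)) (hC : 0 < C)
    (hb0 : ∀ x : ℝ, 0 < x → x < 1 → ‖h x‖ ≤ C * x ^ (-a)) {s : ℂ} (hs : a < s.re) :
    DifferentiableAt ℂ (mellin (hPlus h)) s := by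
  have := mellin_differentiableAt_of_isBigO_rpow (f := (Set.Iio 1).indicator h) (s := s)
    (aux_locInt_indicator hloc measurableSet_Iio)
    (by rw [← hPlus_eq]; exact hPlus_O_top h (s.re + 1)) (lt_add_one _)
    (by rw [← hPlus_eq]; exact hPlus_O_bot hC hb0) hs
  rw [← hPlus_eq] at this
  exact this

lemma hMinus_mellin_diff (hloc : LocallyIntegrableOn h (Set.Ioi 0)) (hC : 0 < C)
    (hb1 : ∀ x : ℝ, 1 ≤ x → ‖h x‖ ≤ C * x ^ a) {s : ℂ} (hs : s.re < -a) :
    DifferentiableAt ℂ (mellin (hMinus h)) s := by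
  have := mellin_differentiableAt_of_isBigO_rpow (f := (Set.Ici 1).indicator h) (s := s)
    (aux_locInt_indicator hloc measurableSet_Ici)
    (by rw [← hMinus_eq]; exact hMinus_O_top hC hb1) hs
    (by rw [← hMinus_eq]; exact hMinus_O_bot h (s.re - 1)) (sub_one_lt _)
  rw [← hMinus_eq] at this
  exact this

end hbounds

lemma rpow_helper {y : ℝ} (hy : 0 < y) (p q : ℝ) : y ^ p * y ^ q / y = y ^ (p + q - 1) := by
  rw [show p + q - 1 = p + (q + -1) by ring, Real.rpow_add hy, Real.rpow_add hy,
    Real.rpow_neg_one]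
  ring

lemma div_rpow' {x y : ℝ} (hx : 0 ≤ x) (hy : 0 < y) (e : ℝ) :
    (x/y) ^ e = x ^ e * y ^ (-e) := by
  rw [Real.div_rpow hx hy.le, Real.rpow_neg hy.le, div_eq_mul_inv]

section conv
variable {h : ℝ → ℂ} {a C : ℝ} {f : ℝ → ℂ}

lemma aux_conv_aesm (hloc : LocallyIntegrableOn h (Set.Ioi 0)) (hf : IsStrongSchwartz f)
    {k : ℝ → ℂ} (hk : AEStronglyMeasurable k (volume.restrict (Set.Ioi 0)))
    {x : ℝ} (hx : 0 < x) :
    AEStronglyMeasurable (fun y : ℝ => f (x/y) * k y / (y:ℂ))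
      (volume.restrict (Set.Ioi 0)) := by
  have a1 : ContinuousOn (fun y : ℝ => f (x/y)) (Set.Ioi 0) :=
    hf.1.continuousOn.comp (continuousOn_const.div continuousOn_id fun y hy => ne_of_gt hy)
      (fun y hy => div_pos hx hy)
  have a3 : AEStronglyMeasurable (fun y : ℝ => ((y:ℂ))⁻¹) (volume.restrict (Set.Ioi 0)) :=
    (Complex.measurable_ofReal.inv).aestronglyMeasurable
  have := ((a1.aestronglyMeasurable measurableSet_Ioi).mul hk).mul a3
  exact this.congr (Eventually.of_forall fun y => by
    simp only [Pi.mul_apply]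
    rw [div_eq_mul_inv (f (x/y) * k y) (y:ℂ)])

lemma plus_piece (hloc : LocallyIntegrableOn h (Set.Ioi 0)) (hC : 0 < C) (ha : 0 ≤ a)
    (hb0 : ∀ x : ℝ, 0 < x → x < 1 → ‖h x‖ ≤ C * x ^ (-a))
    (hf : IsStrongSchwartz f) (r : ℝ) (hr : a + 1 ≤ r) :
    ∃ K : ℝ, 0 ≤ K ∧ ∀ x : ℝ, 0 < x →
      Integrable (fun y : ℝ => f (x/y) * hPlus h y / (y:ℂ)) (volume.restrict (Set.Ioi 0)) ∧
      ‖mulConv f (hPlus h) x‖ ≤ K * x ^ (-r) := by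
  obtain ⟨Cf, hCf0, hCf⟩ := aux_fbound hf (-r)
  refine ⟨Cf * C, by positivity, fun x hx => ?_⟩
  have haesm : AEStronglyMeasurable (fun y : ℝ => f (x/y) * hPlus h y / (y:ℂ))
      (volume.restrict (Set.Ioi 0)) := by
    refine aux_conv_aesm hloc hf ?_ hx
    rw [hPlus_eq]; exact aux_aesm_indicator hloc measurableSet_Iio
  set Mx : ℝ → ℝ := (Set.Ioc (0:ℝ) 1).indicator (fun _ => Cf * C * x ^ (-r)) with hMx
  have hMint : Integrable Mx (volume.restrict (Set.Ioi 0)) := by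
    rw [hMx, integrable_indicator_iff measurableSet_Ioc]
    refine (integrableOn_const_iff).mpr (Or.inr ?_)
    exact lt_of_le_of_lt (Measure.restrict_apply_le _ _) (by simp)
  have hbd : ∀ᵐ y ∂(volume.restrict (Set.Ioi (0:ℝ))),
      ‖f (x/y) * hPlus h y / (y:ℂ)‖ ≤ Mx y := by
    refine (ae_restrict_iff' (measurableSet_Ioi (a := (0:ℝ)))).mpr
      (Eventually.of_forall fun y hy => ?_)
    have hy' : (0:ℝ) < y := hy
    by_cases hy1 : y < 1
    · have hmem : y ∈ Set.Ioc (0:ℝ) 1 := ⟨hy', hy1.le⟩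
      rw [hMx, Set.indicator_of_mem hmem]
      have hnorm : ‖f (x/y) * hPlus h y / (y:ℂ)‖ = ‖f (x/y)‖ * ‖h y‖ / y := by
        rw [norm_div, norm_mul, Complex.norm_real, Real.norm_of_nonneg hy'.le]
        simp [hPlus, hy1]
      rw [hnorm]
      have hxy : (0:ℝ) < x / y := div_pos hx hy'
      calc ‖f (x/y)‖ * ‖h y‖ / y ≤ (Cf * (x/y) ^ (-r)) * (C * y ^ (-a)) / y := by
            gcongr
            · exact hCf _ hxy
            · exact hb0 y hy' hy1
      _ = Cf * C * x ^ (-r) * (y ^ r * y ^ (-a) / y) := by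
            rw [div_rpow' hx.le hy', neg_neg]; ring
      _ ≤ Cf * C * x ^ (-r) := by
            rw [rpow_helper hy']
            have h1 : y ^ (r + -a - 1) ≤ 1 :=
              Real.rpow_le_one hy'.le hy1.le (by linarith)
            nlinarith [Real.rpow_pos_of_pos hx (-r), Real.rpow_nonneg hy'.le (r + -a - 1),
              mul_nonneg (mul_nonneg hCf0 hC.le) (Real.rpow_pos_of_pos hx (-r)).le]
    · have : hPlus h y = 0 := by simp [hPlus, hy1]
      rw [this]
      simp only [mul_zero, zero_div, norm_zero]
      exact Set.indicator_nonneg (fun _ _ => by positivity) y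
  refine ⟨Integrable.mono' hMint haesm hbd, ?_⟩
  calc ‖mulConv f (hPlus h) x‖ ≤ ∫ y, Mx y ∂(volume.restrict (Set.Ioi 0)) :=
        norm_integral_le_of_norm_le hMint hbd
  _ = Cf * C * x ^ (-r) := by
        rw [hMx, integral_indicator_const _ measurableSet_Ioc,
          measureReal_restrict_apply measurableSet_Ioc]
        simp [Set.Ioc_inter_Ioi, Real.volume_Ioc, Real.volume_real_Ioc]

lemma minus_piece (hloc : LocallyIntegrableOn h (Set.Ioi 0)) (hC : 0 < C) (ha : 0 ≤ a)
    (hb1 : ∀ x : ℝ, 1 ≤ x → ‖h x‖ ≤ C * x ^ a)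
    (hf : IsStrongSchwartz f) (r : ℝ) (hr : a + 2 ≤ r) :
    ∃ K : ℝ, 0 ≤ K ∧ ∀ x : ℝ, 0 < x →
      Integrable (fun y : ℝ => f (x/y) * hMinus h y / (y:ℂ)) (volume.restrict (Set.Ioi 0)) ∧
      ‖mulConv f (hMinus h) x‖ ≤ K * x ^ r := by
  obtain ⟨Cf, hCf0, hCf⟩ := aux_fbound hf r
  set V : ℝ := ∫ y in Set.Ioi (1:ℝ), y ^ (-3:ℝ) with hV
  have hV0 : 0 ≤ V := setIntegral_nonneg measurableSet_Ioi
    (fun y hy => Real.rpow_nonneg (le_trans zero_le_one (le_of_lt hy)) _)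
  have hVint : IntegrableOn (fun y : ℝ => y ^ (-3:ℝ)) (Set.Ioi 1) volume :=
    integrableOn_Ioi_rpow_of_lt (by norm_num) one_pos
  refine ⟨Cf * C * V, by positivity, fun x hx => ?_⟩
  have haesm : AEStronglyMeasurable (fun y : ℝ => f (x/y) * hMinus h y / (y:ℂ))
      (volume.restrict (Set.Ioi 0)) := by
    refine aux_conv_aesm hloc hf ?_ hx
    rw [hMinus_eq]; exact aux_aesm_indicator hloc measurableSet_Ici
  set Mx : ℝ → ℝ := (Set.Ioi (1:ℝ)).indicator (fun y => Cf * C * x ^ r * y ^ (-3:ℝ)) with hMx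
  have hMint : Integrable Mx (volume.restrict (Set.Ioi 0)) := by
    rw [hMx, integrable_indicator_iff measurableSet_Ioi]
    rw [IntegrableOn, Measure.restrict_restrict measurableSet_Ioi]
    have hss : Set.Ioi (1:ℝ) ∩ Set.Ioi 0 = Set.Ioi 1 := by
      rw [Set.Ioi_inter_Ioi]; norm_num
    rw [hss]
    exact (hVint.const_mul _)
  have hbd : ∀ᵐ y ∂(volume.restrict (Set.Ioi (0:ℝ))),
      ‖f (x/y) * hMinus h y / (y:ℂ)‖ ≤ Mx y := by
    refine (ae_restrict_iff' (measurableSet_Ioi (a := (0:ℝ)))).mpr ?_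
    have hne : ∀ᵐ (y : ℝ), y ≠ (1:ℝ) := by
      rw [ae_iff]
      have : {y : ℝ | ¬y ≠ 1} = {1} := by ext y; simp
      rw [this]
      exact measure_singleton 1
    filter_upwards [hne] with y hyne hy
    have hy' : (0:ℝ) < y := hy
    by_cases hy1 : (1:ℝ) ≤ y
    · have hy2 : (1:ℝ) < y := lt_of_le_of_ne hy1 (Ne.symm hyne)
      have hmem : y ∈ Set.Ioi (1:ℝ) := hy2
      rw [hMx, Set.indicator_of_mem hmem]
      have hnorm : ‖f (x/y) * hMinus h y / (y:ℂ)‖ = ‖f (x/y)‖ * ‖h y‖ / y := by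
        rw [norm_div, norm_mul, Complex.norm_real, Real.norm_of_nonneg hy'.le]
        simp [hMinus, hy1]
      rw [hnorm]
      have hxy : (0:ℝ) < x / y := div_pos hx hy'
      calc ‖f (x/y)‖ * ‖h y‖ / y ≤ (Cf * (x/y) ^ r) * (C * y ^ a) / y := by
            gcongr
            · exact hCf _ hxy
            · exact hb1 y hy1
      _ = Cf * C * x ^ r * (y ^ (-r) * y ^ a / y) := by
            rw [div_rpow' hx.le hy']; ring
      _ ≤ Cf * C * x ^ r * y ^ (-3:ℝ) := by
            rw [rpow_helper hy']
            have h1 : y ^ (-r + a - 1) ≤ y ^ (-3:ℝ) :=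
              Real.rpow_le_rpow_of_exponent_le hy1 (by linarith)
            have h2 : (0:ℝ) ≤ Cf * C * x ^ r := by positivity
            exact mul_le_mul_of_nonneg_left h1 h2
    · have : hMinus h y = 0 := by simp [hMinus, hy1]
      rw [this]
      simp only [mul_zero, zero_div, norm_zero]
      refine Set.indicator_nonneg (fun z hz => ?_) y
      have hz0 : (0:ℝ) ≤ z := le_trans zero_le_one (le_of_lt hz)
      have := Real.rpow_nonneg hz0 (-3:ℝ)
      positivity
  refine ⟨Integrable.mono' hMint haesm hbd, ?_⟩
  calc ‖mulConv f (hMinus h) x‖ ≤ ∫ y, Mx y ∂(volume.restrict (Set.Ioi 0)) :=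
        norm_integral_le_of_norm_le hMint hbd
  _ = Cf * C * V * x ^ r := by
        rw [hMx, integral_indicator measurableSet_Ioi,
          Measure.restrict_restrict measurableSet_Ioi]
        have hss : Set.Ioi (1:ℝ) ∩ Set.Ioi 0 = Set.Ioi 1 := by
          rw [Set.Ioi_inter_Ioi]; norm_num
        rw [hss, integral_const_mul, hV]
        ring

end conv

lemma aux_G0_aesm (f k : ℝ → ℂ)
    (hfc : ContinuousOn f (Set.Ioi 0))
    (hk : AEStronglyMeasurable k (volume.restrict (Set.Ioi 0))) :
    AEStronglyMeasurable (fun p : ℝ × ℝ => f (p.1/p.2) * k p.2 / (p.2:ℂ))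
      ((volume.restrict (Set.Ioi 0)).prod (volume.restrict (Set.Ioi 0))) := by
  have hprod : (volume.restrict (Set.Ioi (0:ℝ))).prod (volume.restrict (Set.Ioi (0:ℝ)))
      = (volume : Measure (ℝ × ℝ)).restrict (Set.Ioi 0 ×ˢ Set.Ioi 0) := by
    rw [Measure.volume_eq_prod, Measure.prod_restrict]
  have hdiv : ContinuousOn (fun p : ℝ × ℝ => p.1 / p.2) (Set.Ioi 0 ×ˢ Set.Ioi 0) :=
    continuousOn_fst.div continuousOn_snd (fun p hp => ne_of_gt hp.2)
  have c2 : AEStronglyMeasurable (fun p : ℝ × ℝ => f (p.1/p.2))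
      ((volume.restrict (Set.Ioi 0)).prod (volume.restrict (Set.Ioi 0))) := by
    rw [hprod]
    exact (hfc.comp hdiv (fun p hp => Set.mem_Ioi.mpr (div_pos hp.1 hp.2))).aestronglyMeasurable
      (measurableSet_Ioi.prod measurableSet_Ioi)
  have c3 : AEStronglyMeasurable (fun p : ℝ × ℝ => k p.2)
      ((volume.restrict (Set.Ioi 0)).prod (volume.restrict (Set.Ioi 0))) := hk.comp_snd
  have c4' : AEStronglyMeasurable (fun p : ℝ × ℝ => ((p.2 : ℂ))⁻¹)
      ((volume.restrict (Set.Ioi 0)).prod (volume.restrict (Set.Ioi 0))) :=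
    ((Complex.measurable_ofReal.comp measurable_snd).inv).aestronglyMeasurable
  have := (c2.mul c3).mul c4'
  refine this.congr (Eventually.of_forall fun p => ?_)
  simp only [Pi.mul_apply]
  rw [div_eq_mul_inv (f (p.1/p.2) * k p.2) ((p.2:ℝ):ℂ)]
/-- mean-periodicity implies the meromorphic continuation of the half
Mellin transform: there is a meromorphic `Φ` on `ℂ` with `Φ(s) = ∫₀¹ h(x) x^s dx/x`
for `Re(s) > a` and `Φ(s) = −∫₁^∞ h(x) x^s dx/x` for `Re(s) < −a`. -/
theorem halfMellin_meromorphic_continuation (h : ℝ → ℂ)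
    (hloc : MeasureTheory.LocallyIntegrableOn h (Set.Ioi 0))
    (a C : ℝ) (ha : 0 ≤ a) (hC : 0 < C)
    (hb1 : ∀ x : ℝ, 1 ≤ x → ‖h x‖ ≤ C * x ^ a)
    (hb0 : ∀ x : ℝ, 0 < x → x < 1 → ‖h x‖ ≤ C * x ^ (-a))
    (f : ℝ → ℂ) (hf : IsStrongSchwartz f)
    (hnt : ∃ x : ℝ, 0 < x ∧ f x ≠ 0)
    (hconv : ∀ x : ℝ, 0 < x → mulConv f h x = 0) :
    ∃ Φ : ℂ → ℂ, MeromorphicOn Φ Set.univ ∧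
      (∀ s : ℂ, a < s.re →
        Φ s = ∫ x in Set.Ioo (0:ℝ) 1, h x * (x : ℂ) ^ s / (x : ℂ)) ∧
      (∀ s : ℂ, s.re < -a →
        Φ s = - ∫ x in Set.Ici (1:ℝ), h x * (x : ℂ) ^ s / (x : ℂ)) := by
  have hfc : ContinuousOn f (Set.Ioi 0) := hf.1.continuousOn
  have haesm_p : AEStronglyMeasurable (hPlus h) (volume.restrict (Set.Ioi 0)) := by
    rw [hPlus_eq]; exact aux_aesm_indicator hloc measurableSet_Iio
  have haesm_m : AEStronglyMeasurable (hMinus h) (volume.restrict (Set.Ioi 0)) := by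
    rw [hMinus_eq]; exact aux_aesm_indicator hloc measurableSet_Ici
  obtain ⟨K₁, hK₁0, hK₁⟩ := plus_piece hloc hC ha hb0 hf (a+2) (by linarith)
  obtain ⟨K₂, hK₂0, hK₂⟩ := minus_piece hloc hC ha hb1 hf (a+2) le_rfl
  -- splitting of the convolution
  have hsplit : ∀ x : ℝ, 0 < x →
      mulConv f (hMinus h) x = - mulConv f (hPlus h) x := by
    intro x hx
    have hadd : mulConv f (hPlus h) x + mulConv f (hMinus h) x = mulConv f h x := by
      rw [mulConv, mulConv, mulConv, ← integral_add (hK₁ x hx).1 (hK₂ x hx).1]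
      refine setIntegral_congr_fun measurableSet_Ioi fun y hy => ?_
      have hsum : hPlus h y + hMinus h y = h y := by
        by_cases hy1 : y < 1
        · simp [hPlus, hMinus, hy1, not_le.mpr hy1]
        · simp [hPlus, hMinus, hy1, not_lt.mp hy1]
      rw [← hsum]; ring
    rw [hconv x hx] at hadd
    exact eq_neg_of_add_eq_zero_right hadd
  set g : ℝ → ℂ := fun x => mulConv f (hPlus h) x with hgdef
  -- bounds for g
  have gO_top : ∀ A : ℝ, g =O[atTop] (fun x : ℝ => x ^ (-A)) := by
    intro A
    obtain ⟨K, hK0, hK⟩ := plus_piece hloc hC ha hb0 hf (max A (a+1)) (le_max_right _ _)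
    refine IsBigO.of_bound K ?_
    filter_upwards [eventually_ge_atTop (1:ℝ)] with x hx1
    have hx0 : (0:ℝ) < x := lt_of_lt_of_le one_pos hx1
    rw [Real.norm_rpow_of_nonneg hx0.le, Real.norm_of_nonneg hx0.le]
    refine le_trans (hK x hx0).2 ?_
    have hle : x ^ (-(max A (a+1))) ≤ x ^ (-A) :=
      Real.rpow_le_rpow_of_exponent_le hx1 (neg_le_neg (le_max_left _ _))
    exact mul_le_mul_of_nonneg_left hle hK0
  have gO_bot : ∀ b : ℝ, g =O[nhdsWithin 0 (Set.Ioi 0)] (fun x : ℝ => x ^ (-b)) := by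
    intro b
    obtain ⟨K, hK0, hK⟩ := minus_piece hloc hC ha hb1 hf (max (-b) (a+2)) (le_max_right _ _)
    refine IsBigO.of_bound K ?_
    filter_upwards [Ioo_mem_nhdsGT_of_mem (Set.left_mem_Ico.mpr zero_lt_one)] with x hx
    have hx0 : (0:ℝ) < x := hx.1
    rw [Real.norm_rpow_of_nonneg hx0.le, Real.norm_of_nonneg hx0.le]
    have hgx : ‖g x‖ = ‖mulConv f (hMinus h) x‖ := by
      rw [hsplit x hx0, norm_neg]
    rw [hgx]
    refine le_trans (hK x hx0).2 ?_
    have hle : x ^ (max (-b) (a+2)) ≤ x ^ (-b) :=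
      Real.rpow_le_rpow_of_exponent_ge hx0 hx.2.le (le_max_left _ _)
    exact mul_le_mul_of_nonneg_left hle hK0
  -- measurability and local integrability of g
  have haesm_g : AEStronglyMeasurable g (volume.restrict (Set.Ioi 0)) :=
    (aux_G0_aesm f (hPlus h) hfc haesm_p).integral_prod_right'
  have hgInt : IntegrableOn g (Set.Ioi 0) volume := by
    set Mg : ℝ → ℝ := (Set.Ioc (0:ℝ) 1).indicator (fun _ => K₂)
      + (Set.Ioi (1:ℝ)).indicator (fun x => K₁ * x ^ (-(a+2))) with hMg
    have hMgInt : Integrable Mg (volume.restrict (Set.Ioi 0)) := by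
      refine Integrable.add ?_ ?_
      · rw [integrable_indicator_iff measurableSet_Ioc]
        refine (integrableOn_const_iff).mpr (Or.inr ?_)
        exact lt_of_le_of_lt (Measure.restrict_apply_le _ _) (by simp)
      · rw [integrable_indicator_iff measurableSet_Ioi, IntegrableOn,
          Measure.restrict_restrict measurableSet_Ioi]
        have hss : Set.Ioi (1:ℝ) ∩ Set.Ioi 0 = Set.Ioi 1 := by
          rw [Set.Ioi_inter_Ioi]; norm_num
        rw [hss]
        exact (integrableOn_Ioi_rpow_of_lt (by linarith) one_pos).const_mul _
    refine Integrable.mono' hMgInt haesm_g ?_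
    refine (ae_restrict_iff' (measurableSet_Ioi (a := (0:ℝ)))).mpr
      (Eventually.of_forall fun y hy => ?_)
    have hy' : (0:ℝ) < y := hy
    by_cases hy1 : y ≤ 1
    · have hmem : y ∈ Set.Ioc (0:ℝ) 1 := ⟨hy', hy1⟩
      have hval : Mg y = K₂ := by
        rw [hMg]
        simp only [Pi.add_apply]
        rw [Set.indicator_of_mem hmem,
          Set.indicator_of_notMem (fun hc : y ∈ Set.Ioi (1:ℝ) => absurd hc (not_lt.mpr hy1)),
          add_zero]
      rw [hval]
      have hb := (hK₂ y hy').2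
      have : ‖mulConv f (hMinus h) y‖ = ‖g y‖ := by rw [hsplit y hy', norm_neg]
      rw [this] at hb
      refine le_trans hb ?_
      have : y ^ (a+2) ≤ 1 := Real.rpow_le_one hy'.le hy1 (by linarith)
      nlinarith
    · push_neg at hy1
      have hval : Mg y = K₁ * y ^ (-(a+2)) := by
        rw [hMg]
        simp [Set.indicator_of_mem (Set.mem_Ioi.mpr hy1),
          Set.indicator_of_notMem (fun hc : y ∈ Set.Ioc (0:ℝ) 1 => absurd hc.2 (not_le.mpr hy1))]
      rw [hval]
      exact (hK₁ y hy').2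
  have hgloc : LocallyIntegrableOn g (Set.Ioi 0) :=
    fun x _ => ⟨Set.Ioi 0, self_mem_nhdsWithin, hgInt⟩
  have hGdiff : ∀ s : ℂ, DifferentiableAt ℂ (mellin g) s := fun s =>
    mellin_differentiableAt_of_isBigO_rpow hgloc (gO_top (s.re+1)) (lt_add_one _)
      (gO_bot (s.re-1)) (sub_one_lt _)
  -- the two factorization identities
  have idPlus : ∀ s : ℂ, a < s.re → mellin g s = mellin f s * mellin (hPlus h) s :=
    fun s hs => mellin_mulConv f (hPlus h) s hfc haesm_p (aux_f_conv hf s)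
      (hPlus_mellinConvergent hloc hC hb0 hs)
  have idMinus : ∀ s : ℂ, s.re < -a →
      mellin g s = -(mellin f s * mellin (hMinus h) s) := by
    intro s hs
    have h1 : mellin g s = - mellin (fun x => mulConv f (hMinus h) x) s := by
      rw [mellin, mellin, ← integral_neg]
      refine setIntegral_congr_fun measurableSet_Ioi fun x hx => ?_
      show (x:ℂ) ^ (s-1) • g x = -((x:ℂ) ^ (s-1) • mulConv f (hMinus h) x)
      rw [hsplit x hx, smul_neg, neg_neg]
    rw [h1, mellin_mulConv f (hMinus h) s hfc haesm_m (aux_f_conv hf s)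
      (hMinus_mellinConvergent hloc hC hb1 hs)]
  -- nonvanishing of mellin f
  have hFne : ∃ s : ℂ, mellin f s ≠ 0 := by
    by_contra hcon
    push_neg at hcon
    obtain ⟨x₀, hx₀, hfx₀⟩ := hnt
    have hvert : Complex.VerticalIntegrable (mellin f) 1 volume :=
      (integrable_zero _ _ _).congr (Eventually.of_forall fun y => (hcon _).symm)
    have hcontAt : ContinuousAt f x₀ := hfc.continuousAt (Ioi_mem_nhds hx₀)
    have hinv := mellinInv_mellin_eq 1 f hx₀ (aux_f_conv hf 1) hvert hcontAt
    rw [← hinv] at hfx₀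
    exact hfx₀ (by simp [mellinInv, hcon])
  have hFanal : ∀ z : ℂ, AnalyticAt ℂ (mellin f) z :=
    Differentiable.analyticAt (fun w => aux_f_diff hf w)
  have hGanal : ∀ z : ℂ, AnalyticAt ℂ (mellin g) z :=
    Differentiable.analyticAt (fun w => hGdiff w)
  have hFiso : ∀ z : ℂ, ∀ᶠ w in nhdsWithin z {z}ᶜ, mellin f w ≠ 0 := by
    intro z
    rcases (hFanal z).eventually_eq_zero_or_eventually_ne_zero with hcase | hcase
    · exfalso
      obtain ⟨s₀, hs₀⟩ := hFne
      have : Set.EqOn (mellin f) 0 Set.univ :=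
        AnalyticOnNhd.eqOn_zero_of_preconnected_of_eventuallyEq_zero
          (fun w _ => hFanal w) isPreconnected_univ (Set.mem_univ z) hcase
      exact hs₀ (this (Set.mem_univ s₀))
    · exact hcase
  -- the meromorphic function
  refine ⟨fun z => if a < z.re then mellin (hPlus h) z
    else if z.re < -a then -mellin (hMinus h) z
    else mellin g z / mellin f z, ?_, ?_, ?_⟩
  · intro z _
    by_cases hz1 : a < z.re
    · have hopen : IsOpen {w : ℂ | a < w.re} := isOpen_lt continuous_const Complex.continuous_re
      have hanal : AnalyticAt ℂ (mellin (hPlus h)) z :=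
        DifferentiableOn.analyticAt
          (fun w hw => (hPlus_mellin_diff hloc hC hb0 hw).differentiableWithinAt)
          (hopen.mem_nhds hz1)
      refine hanal.meromorphicAt.congr ?_
      refine Filter.EventuallyEq.filter_mono ?_ nhdsWithin_le_nhds
      filter_upwards [hopen.mem_nhds hz1] with w hw
      rw [if_pos hw]
    · by_cases hz2 : z.re < -a
      · have hopen : IsOpen {w : ℂ | w.re < -a} := isOpen_lt Complex.continuous_re continuous_const
        have hanal : AnalyticAt ℂ (fun w => -mellin (hMinus h) w) z := by
          refine AnalyticAt.neg ?_
          exact DifferentiableOn.analyticAt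
            (fun w hw => (hMinus_mellin_diff hloc hC hb1 hw).differentiableWithinAt)
            (hopen.mem_nhds hz2)
        refine hanal.meromorphicAt.congr ?_
        refine Filter.EventuallyEq.filter_mono ?_ nhdsWithin_le_nhds
        filter_upwards [hopen.mem_nhds hz2] with w hw
        have hw1 : ¬ a < w.re := by
          have hw' : w.re < -a := hw
          push_neg
          linarith
        rw [if_neg hw1, if_pos hw]
      · have hmero : MeromorphicAt (fun w => mellin g w / mellin f w) z :=
          (hGanal z).meromorphicAt.div (hFanal z).meromorphicAt
        refine hmero.congr ?_
        filter_upwards [hFiso z] with w hFw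
        by_cases hw1 : a < w.re
        · rw [if_pos hw1, idPlus w hw1, mul_comm, mul_div_assoc, div_self hFw, mul_one]
        · rw [if_neg hw1]
          by_cases hw2 : w.re < -a
          · rw [if_pos hw2, idMinus w hw2]
            field_simp
          · rw [if_neg hw2]
  · intro s hs
    simp only [hs, if_true]
    rw [mellin]
    have hcongr : ∀ x ∈ Set.Ioi (0:ℝ), (x:ℂ) ^ (s-1) • hPlus h x
        = (Set.Ioo (0:ℝ) 1).indicator (fun t : ℝ => h t * (t:ℂ) ^ s / (t:ℂ)) x := by
      intro x hx
      have hx' : (0:ℝ) < x := hx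
      by_cases hx1 : x < 1
      · rw [Set.indicator_of_mem (Set.mem_Ioo.mpr ⟨hx', hx1⟩)]
        have : hPlus h x = h x := by simp [hPlus, hx1]
        rw [this, Complex.cpow_sub _ _ (Complex.ofReal_ne_zero.mpr hx'.ne'),
          Complex.cpow_one, smul_eq_mul]
        ring
      · rw [Set.indicator_of_notMem (fun hc : x ∈ Set.Ioo (0:ℝ) 1 => hx1 hc.2)]
        have : hPlus h x = 0 := by simp [hPlus, hx1]
        rw [this, smul_zero]
    rw [setIntegral_congr_fun measurableSet_Ioi hcongr,
      setIntegral_indicator measurableSet_Ioo]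
    have hss : Set.Ioi (0:ℝ) ∩ Set.Ioo 0 1 = Set.Ioo 0 1 :=
      Set.inter_eq_self_of_subset_right (fun t ht => ht.1)
    rw [hss]
  · intro s hs
    have hs1 : ¬ a < s.re := by push_neg; linarith
    simp only [hs, hs1, if_true, if_false]
    rw [mellin]
    have hcongr : ∀ x ∈ Set.Ioi (0:ℝ), (x:ℂ) ^ (s-1) • hMinus h x
        = (Set.Ici (1:ℝ)).indicator (fun t : ℝ => h t * (t:ℂ) ^ s / (t:ℂ)) x := by
      intro x hx
      have hx' : (0:ℝ) < x := hx
      by_cases hx1 : (1:ℝ) ≤ x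
      · rw [Set.indicator_of_mem (Set.mem_Ici.mpr hx1)]
        have : hMinus h x = h x := by simp [hMinus, hx1]
        rw [this, Complex.cpow_sub _ _ (Complex.ofReal_ne_zero.mpr hx'.ne'),
          Complex.cpow_one, smul_eq_mul]
        ring
      · rw [Set.indicator_of_notMem (fun hc : x ∈ Set.Ici (1:ℝ) => hx1 hc)]
        have : hMinus h x = 0 := by simp [hMinus, hx1]
        rw [this, smul_zero]
    rw [setIntegral_congr_fun measurableSet_Ioi hcongr,
      setIntegral_indicator measurableSet_Ici]
    have hss : Set.Ioi (0:ℝ) ∩ Set.Ici 1 = Set.Ici 1 :=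
      Set.inter_eq_self_of_subset_right
        (fun t (ht : t ∈ Set.Ici (1:ℝ)) => Set.mem_Ioi.mpr (lt_of_lt_of_le zero_lt_one ht))
    rw [hss]
end

section
/- Let w ∈ 𝐒(ℝ₊ˣ), λ ∈ ℂ, k ∈ ℕ, and define f_{λ,k} : (0,∞) → ℂ by f_{λ,k}(x) = x^{−λ} (log x)^k. Then for every x > 0 the integral (w ∗ f_{λ,k})(x) = ∫₀^∞ w(y) f_{λ,k}(x/y) dy/y converges absolutely and equals x^{−λ} Σ_{j=0}^{k} (−1)^j (k choose j) (log x)^{k−j} ∫₀^∞ w(y) y^{λ} (log y)^j dy/y, where each integral ∫₀^∞ w(y) y^{λ} (log y)^j dy/y converges absolutely. -/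
open MeasureTheory Set Filter Asymptotics

namespace MulConvAux
open Complex

variable {w : ℝ → ℂ}

lemma wbound (hw : ∀ (m : ℤ) (n : ℕ), ∃ C : ℝ,
    ∀ x ∈ Set.Ioi (0:ℝ), x ^ m * ‖iteratedDerivWithin n w (Set.Ioi 0) x‖ ≤ C) (m : ℤ) :
    ∃ C : ℝ, 0 ≤ C ∧ ∀ y ∈ Set.Ioi (0:ℝ), ‖w y‖ ≤ C * y ^ (-(m:ℝ)) := by
  obtain ⟨C, hC⟩ := hw m 0
  have h1 : (1:ℝ) ∈ Set.Ioi (0:ℝ) := by norm_num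
  have hC0 : 0 ≤ C := by
    have := hC 1 h1
    simpa [iteratedDerivWithin_zero] using this.trans' (by positivity)
  refine ⟨C, hC0, fun y hy => ?_⟩
  have hy0 : (0:ℝ) < y := hy
  have := hC y hy
  rw [iteratedDerivWithin_zero] at this
  have hz : y ^ m = y ^ ((m:ℝ)) := (Real.rpow_intCast y m).symm
  have hpos : (0:ℝ) < y ^ ((m:ℝ)) := Real.rpow_pos_of_pos hy0 _
  rw [hz] at this
  have : ‖w y‖ ≤ C / y ^ ((m:ℝ)) := by
    rw [le_div_iff₀ hpos]; linarith [this]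
  simpa [Real.rpow_neg hy0.le, div_eq_mul_inv] using this

-- continuity on Ioi 0
lemma contF (hw : ContinuousOn w (Set.Ioi 0)) (s : ℂ) (j : ℕ) :
    ContinuousOn (fun y : ℝ => w y * (y:ℂ) ^ s * (Real.log y : ℂ) ^ j / (y:ℂ)) (Set.Ioi 0) := by
  apply ContinuousOn.div
  · apply ContinuousOn.mul
    · apply hw.mul
      exact fun y hy => (Complex.continuousAt_ofReal_cpow_const y s (Or.inr (ne_of_gt hy))).continuousWithinAt
    · apply ContinuousOn.pow
      exact Complex.continuous_ofReal.comp_continuousOn (Real.continuousOn_log.mono (by intro y hy; exact ne_of_gt hy))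
  · exact Complex.continuous_ofReal.continuousOn
  · intro y hy
    simpa using (ne_of_gt (hy : (0:ℝ) < y))

-- norm computation
lemma normF (s : ℂ) (j : ℕ) {y : ℝ} (hy : 0 < y) :
    ‖w y * (y:ℂ) ^ s * (Real.log y : ℂ) ^ j / (y:ℂ)‖
      = ‖w y‖ * y ^ s.re * |Real.log y| ^ j * y⁻¹ := by
  rw [norm_div, norm_mul, norm_mul, norm_pow, Complex.norm_cpow_eq_rpow_re_of_pos hy]
  simp [Complex.norm_real, Real.norm_eq_abs, abs_of_pos hy, div_eq_mul_inv]

lemma intF (hwc : ContinuousOn w (Set.Ioi 0))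
    (hw : ∀ (m : ℤ) (n : ℕ), ∃ C : ℝ,
      ∀ x ∈ Set.Ioi (0:ℝ), x ^ m * ‖iteratedDerivWithin n w (Set.Ioi 0) x‖ ≤ C)
    (s : ℂ) (j : ℕ) :
    MeasureTheory.IntegrableOn
      (fun y : ℝ => w y * (y:ℂ) ^ s * (Real.log y : ℂ) ^ j / (y:ℂ)) (Set.Ioi 0) := by
  set F := fun y : ℝ => w y * (y:ℂ) ^ s * (Real.log y : ℂ) ^ j / (y:ℂ) with hF
  have hmeas : ∀ t : Set ℝ, MeasurableSet t → t ⊆ Set.Ioi 0 →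
      AEStronglyMeasurable F (volume.restrict t) := fun t ht hsub =>
    ((contF hwc s j).mono hsub).aestronglyMeasurable ht
  rw [show Set.Ioi (0:ℝ) = Set.Ioc 0 1 ∪ Set.Ioi 1 from (Set.Ioc_union_Ioi_eq_Ioi zero_le_one).symm]
  apply MeasureTheory.IntegrableOn.union
  · -- on Ioc 0 1
    set r : ℝ := 1 + (j:ℝ) - s.re with hr
    obtain ⟨C, hC0, hC⟩ := wbound hw (-⌈r⌉)
    have hbd : ∀ y ∈ Set.Ioc (0:ℝ) 1, ‖F y‖ ≤ C := by
      intro y hy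
      obtain ⟨hy0, hy1⟩ := hy
      have hnorm := normF (w := w) s j hy0
      have h1 : ‖w y‖ ≤ C * y ^ ((⌈r⌉:ℝ)) := by
        have := hC y hy0
        simpa using this
      have hlog : |Real.log y| ≤ y⁻¹ := by
        rw [abs_of_nonpos (Real.log_nonpos hy0.le hy1)]
        have := Real.log_le_sub_one_of_pos (inv_pos.2 hy0)
        rw [Real.log_inv] at this
        linarith [inv_pos.2 hy0]
      have h2 : |Real.log y| ^ j ≤ y ^ (-(j:ℝ)) := by
        rw [Real.rpow_neg hy0.le, Real.rpow_natCast, ← inv_pow]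
        exact pow_le_pow_left₀ (abs_nonneg _) hlog j
      calc ‖F y‖ = ‖w y‖ * y ^ s.re * |Real.log y| ^ j * y⁻¹ := hnorm
        _ ≤ (C * y ^ ((⌈r⌉:ℝ))) * y ^ s.re * (y ^ (-(j:ℝ))) * y⁻¹ := by
            gcongr <;> positivity
        _ = C * y ^ ((⌈r⌉:ℝ) + (s.re + (-(j:ℝ) + (-1)))) := by
            rw [← Real.rpow_neg_one y, mul_assoc, mul_assoc, mul_assoc,
              ← Real.rpow_add hy0, ← Real.rpow_add hy0, ← Real.rpow_add hy0]
        _ ≤ C * 1 := by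
            apply mul_le_mul_of_nonneg_left _ hC0
            apply Real.rpow_le_one hy0.le hy1
            have : r ≤ (⌈r⌉:ℝ) := Int.le_ceil r
            rw [hr] at this; linarith
        _ = C := mul_one C
    apply MeasureTheory.Integrable.mono' (g := fun _ => C)
    · exact integrableOn_const measure_Ioc_lt_top.ne
    · exact hmeas _ measurableSet_Ioc (Set.Ioc_subset_Ioi_self)
    · filter_upwards [ae_restrict_mem measurableSet_Ioc] with y hy using hbd y hy
  · -- on Ioi 1
    set m : ℤ := ⌈1 + (j:ℝ) + s.re⌉ with hm
    obtain ⟨C, hC0, hC⟩ := wbound hw m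
    have hbd : ∀ y ∈ Set.Ioi (1:ℝ), ‖F y‖ ≤ C * y ^ (-2:ℝ) := by
      intro y hy
      have hy1 : (1:ℝ) < y := hy
      have hy0 : (0:ℝ) < y := lt_trans one_pos hy1
      have h1 : ‖w y‖ ≤ C * y ^ (-(m:ℝ)) := hC y hy0
      have hlog : |Real.log y| ≤ y := by
        rw [_root_.abs_of_nonneg (Real.log_nonneg hy1.le)]
        linarith [Real.log_le_sub_one_of_pos hy0]
      have h2 : |Real.log y| ^ j ≤ y ^ ((j:ℝ)) := by
        rw [Real.rpow_natCast]
        exact pow_le_pow_left₀ (abs_nonneg _) hlog j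
      calc ‖F y‖ = ‖w y‖ * y ^ s.re * |Real.log y| ^ j * y⁻¹ := normF s j hy0
        _ ≤ (C * y ^ (-(m:ℝ))) * y ^ s.re * (y ^ ((j:ℝ))) * y⁻¹ := by
            gcongr <;> positivity
        _ = C * y ^ (-(m:ℝ) + (s.re + ((j:ℝ) + (-1)))) := by
            rw [← Real.rpow_neg_one y, mul_assoc, mul_assoc, mul_assoc,
              ← Real.rpow_add hy0, ← Real.rpow_add hy0, ← Real.rpow_add hy0]
        _ ≤ C * y ^ (-2:ℝ) := by
            apply mul_le_mul_of_nonneg_left _ hC0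
            apply Real.rpow_le_rpow_of_exponent_le hy1.le
            have : 1 + (j:ℝ) + s.re ≤ (m:ℝ) := Int.le_ceil _
            linarith
    apply MeasureTheory.Integrable.mono' (g := fun y => C * y ^ (-2:ℝ))
    · exact (integrableOn_Ioi_rpow_of_lt (by norm_num) one_pos).const_mul C
    · exact hmeas _ measurableSet_Ioi (fun y hy => Set.mem_Ioi.2 (lt_trans one_pos (Set.mem_Ioi.1 hy)))
    · filter_upwards [ae_restrict_mem measurableSet_Ioi] with y hy using hbd y hy


lemma binomC (a b : ℂ) (k : ℕ) :
    (a - b) ^ k = ∑ j ∈ Finset.range (k + 1),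
      (-1:ℂ) ^ j * (k.choose j : ℂ) * a ^ (k - j) * b ^ j := by
  rw [sub_eq_add_neg, add_pow, ← Finset.sum_range_reflect]
  apply Finset.sum_congr rfl
  intro j hj
  have hj' : j ≤ k := by simpa [Nat.lt_succ_iff] using hj
  have h1 : k + 1 - 1 - j = k - j := by omega
  have h2 : k - (k - j) = j := by omega
  rw [h1, h2, Nat.choose_symm hj', neg_pow]
  ring

lemma pointwiseEq (w : ℝ → ℂ) (lam : ℂ) (k : ℕ) {x y : ℝ} (hx : 0 < x) (hy : 0 < y) :
    w y * (((x / y : ℝ) : ℂ) ^ (-lam) * (Real.log (x / y) : ℂ) ^ k) / (y : ℂ)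
      = ∑ j ∈ Finset.range (k + 1),
        ((x:ℂ) ^ (-lam) * ((-1:ℂ) ^ j * (k.choose j : ℂ) * (Real.log x : ℂ) ^ (k - j))) *
          (w y * (y:ℂ) ^ lam * (Real.log y : ℂ) ^ j / (y:ℂ)) := by
  have harg : (↑y : ℂ).arg ≠ Real.pi := by
    rw [Complex.arg_ofReal_of_nonneg hy.le]
    exact (Real.pi_ne_zero).symm
  have hcp : ((x / y : ℝ) : ℂ) ^ (-lam) = (x:ℂ) ^ (-lam) * (y:ℂ) ^ lam := by
    rw [div_eq_mul_inv, Complex.ofReal_mul,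
      mul_cpow_ofReal_nonneg hx.le (inv_nonneg.2 hy.le), Complex.ofReal_inv,
      Complex.inv_cpow _ _ harg, Complex.cpow_neg (y:ℂ) lam, inv_inv]
  have hlog : Real.log (x / y) = Real.log x - Real.log y := Real.log_div hx.ne' hy.ne'
  rw [hcp, hlog, Complex.ofReal_sub, binomC, Finset.mul_sum, Finset.mul_sum, Finset.sum_div]
  apply Finset.sum_congr rfl
  intro j hj
  ring

end MulConvAux

/-- for `w ∈ 𝐒(ℝ₊ˣ)` and `f_{λ,k}(x) = x^{−λ} (log x)^k`,
`(w ∗ f_{λ,k})(x) = ∫₀^∞ w(y) f_{λ,k}(x/y) dy/y` converges absolutely and equals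
`x^{−λ} Σ_{j=0}^{k} (−1)^j (k choose j) (log x)^{k−j} ∫₀^∞ w(y) y^{λ} (log y)^j dy/y`. -/
theorem mulConv_with_monomial (w : ℝ → ℂ) (hw : IsStrongSchwartz w) (lam : ℂ) (k : ℕ) :
    ∀ x : ℝ, 0 < x →
      MeasureTheory.IntegrableOn
        (fun y : ℝ => w y * (((x / y : ℝ) : ℂ) ^ (-lam) * (Real.log (x / y) : ℂ) ^ k)
          / (y : ℂ)) (Set.Ioi 0) ∧
      (∀ j : ℕ, MeasureTheory.IntegrableOn
        (fun y : ℝ => w y * (y : ℂ) ^ lam * (Real.log y : ℂ) ^ j / (y : ℂ)) (Set.Ioi 0)) ∧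
      (∫ y in Set.Ioi (0:ℝ),
          w y * (((x / y : ℝ) : ℂ) ^ (-lam) * (Real.log (x / y) : ℂ) ^ k) / (y : ℂ)) =
        (x : ℂ) ^ (-lam) * ∑ j ∈ Finset.range (k + 1),
          (-1 : ℂ) ^ j * (k.choose j : ℂ) * (Real.log x : ℂ) ^ (k - j) *
            ∫ y in Set.Ioi (0:ℝ), w y * (y : ℂ) ^ lam * (Real.log y : ℂ) ^ j / (y : ℂ) := by
  intro x hx
  have hwc : ContinuousOn w (Set.Ioi 0) := hw.1.continuousOn
  have hI : ∀ j : ℕ, MeasureTheory.IntegrableOn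
      (fun y : ℝ => w y * (y : ℂ) ^ lam * (Real.log y : ℂ) ^ j / (y : ℂ)) (Set.Ioi 0) :=
    fun j => MulConvAux.intF hwc hw.2 lam j
  set G := fun y : ℝ => ∑ j ∈ Finset.range (k + 1),
      ((x:ℂ) ^ (-lam) * ((-1:ℂ) ^ j * (k.choose j : ℂ) * (Real.log x : ℂ) ^ (k - j))) *
        (w y * (y:ℂ) ^ lam * (Real.log y : ℂ) ^ j / (y:ℂ)) with hG
  have hGint : MeasureTheory.IntegrableOn G (Set.Ioi 0) :=
    MeasureTheory.integrable_finset_sum _ (fun j _ => ((hI j).const_mul _))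
  have hEq : Set.EqOn
      (fun y : ℝ => w y * (((x / y : ℝ) : ℂ) ^ (-lam) * (Real.log (x / y) : ℂ) ^ k) / (y : ℂ))
      G (Set.Ioi 0) := fun y hy => MulConvAux.pointwiseEq w lam k hx hy
  refine ⟨hGint.congr_fun (fun y hy => (hEq hy).symm) measurableSet_Ioi, hI, ?_⟩
  rw [MeasureTheory.setIntegral_congr_fun measurableSet_Ioi hEq, hG,
    MeasureTheory.integral_finset_sum _ (fun j _ => ((hI j).const_mul _)), Finset.mul_sum]
  apply Finset.sum_congr rfl
  intro j hj
  rw [MeasureTheory.integral_const_mul]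
  ring
end

section
/- Let w ∈ 𝐒(ℝ₊ˣ). Then the Mellin transform M(w) is an entire function and for every λ ∈ ℂ and every j ∈ ℕ, its j-th derivative satisfies M(w)⁽ʲ⁾(λ) = ∫₀^∞ w(y) y^{λ} (log y)^j dy/y, the integral converging absolutely. -/
open MeasureTheory Set Filter Asymptotics

/-- auxiliary: log-power-weighted version of `w`. -/
noncomputable def Glog (w : ℝ → ℂ) (n : ℕ) (t : ℝ) : ℂ := (Real.log t) ^ n • w t

lemma wbound_aux {w : ℝ → ℂ} (hw : IsStrongSchwartz w) (m : ℤ) :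
    ∃ C : ℝ, 0 ≤ C ∧ ∀ x ∈ Set.Ioi (0:ℝ), ‖w x‖ ≤ C * x ^ (((-m : ℤ) : ℝ)) := by
  obtain ⟨C, hC⟩ := hw.2 m 0
  refine ⟨max C 0, le_max_right _ _, fun x hx => ?_⟩
  have hx0 : (0:ℝ) < x := hx
  have h := hC x hx
  rw [iteratedDerivWithin_zero] at h
  have hxm : (0:ℝ) < x ^ m := zpow_pos hx0 m
  have h1 : ‖w x‖ * x ^ m ≤ max C 0 := by
    nlinarith [le_max_left C 0]
  rw [Real.rpow_intCast, zpow_neg]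
  calc ‖w x‖ = (‖w x‖ * x ^ m) * (x ^ m)⁻¹ := by field_simp
    _ ≤ max C 0 * (x ^ m)⁻¹ :=
        mul_le_mul_of_nonneg_right h1 (inv_nonneg.mpr hxm.le)

lemma Glog_top {w : ℝ → ℂ} (hw : IsStrongSchwartz w) (n : ℕ) (a : ℝ) :
    (Glog w n) =O[Filter.atTop] (fun x : ℝ => x ^ (-a)) := by
  obtain ⟨C, hC0, hC⟩ := wbound_aux hw (⌈a⌉ + n)
  rw [Asymptotics.isBigO_iff]
  refine ⟨C, ?_⟩
  filter_upwards [eventually_ge_atTop (1:ℝ)] with x hx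
  have hx0 : (0:ℝ) < x := lt_of_lt_of_le zero_lt_one hx
  have hlog : |Real.log x| ≤ x := by
    rw [abs_of_nonneg (Real.log_nonneg hx)]
    have := Real.log_le_sub_one_of_pos hx0
    linarith
  have hlogn : |Real.log x| ^ n ≤ x ^ n := pow_le_pow_left₀ (abs_nonneg _) hlog n
  have hwx := hC x hx0
  have hnorm : ‖Glog w n x‖ = |Real.log x| ^ n * ‖w x‖ := by
    rw [Glog, norm_smul, Real.norm_eq_abs, abs_pow]
  have h2 : ‖Glog w n x‖ ≤ x ^ n * (C * x ^ ((-(⌈a⌉ + n) : ℤ) : ℝ)) := by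
    rw [hnorm]
    exact mul_le_mul hlogn hwx (norm_nonneg _)
      (pow_nonneg hx0.le n)
  have h3 : x ^ n * (C * x ^ ((-(⌈a⌉ + n) : ℤ) : ℝ)) = C * x ^ ((-⌈a⌉ : ℤ) : ℝ) := by
    rw [← Real.rpow_natCast x n, ← mul_assoc, mul_comm (x ^ ((n:ℕ):ℝ)) C, mul_assoc,
      ← Real.rpow_add hx0]
    norm_num
  have h4 : x ^ ((-⌈a⌉ : ℤ) : ℝ) ≤ x ^ (-a) := by
    apply Real.rpow_le_rpow_of_exponent_le hx
    have := Int.le_ceil a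
    push_cast
    linarith
  have h5 : ‖x ^ (-a)‖ = x ^ (-a) := Real.norm_of_nonneg (Real.rpow_nonneg hx0.le _)
  rw [h5]
  calc ‖Glog w n x‖ ≤ C * x ^ ((-⌈a⌉ : ℤ) : ℝ) := by rw [← h3]; exact h2
    _ ≤ C * x ^ (-a) := mul_le_mul_of_nonneg_left h4 hC0

lemma Glog_bot {w : ℝ → ℂ} (hw : IsStrongSchwartz w) (n : ℕ) (b : ℝ) :
    (Glog w n) =O[nhdsWithin 0 (Set.Ioi 0)] (fun x : ℝ => x ^ (-b)) := by
  obtain ⟨C, hC0, hC⟩ := wbound_aux hw (-(⌈-b⌉ + n))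
  rw [Asymptotics.isBigO_iff]
  refine ⟨C, ?_⟩
  have hev : ∀ᶠ x in nhdsWithin (0:ℝ) (Set.Ioi 0), x < 1 :=
    Filter.Eventually.filter_mono nhdsWithin_le_nhds (eventually_lt_nhds zero_lt_one)
  filter_upwards [self_mem_nhdsWithin, hev] with x hx hx1
  have hx0 : (0:ℝ) < x := hx
  have hlog : |Real.log x| ≤ x⁻¹ := by
    rw [abs_of_neg (Real.log_neg hx0 hx1)]
    have h := Real.log_le_sub_one_of_pos (inv_pos.mpr hx0)
    rw [Real.log_inv] at h
    linarith
  have hlogn : |Real.log x| ^ n ≤ x ^ ((-(n:ℝ))) := by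
    have : x ^ ((-(n:ℝ))) = (x⁻¹) ^ n := by
      rw [Real.rpow_neg hx0.le, Real.rpow_natCast, inv_pow]
    rw [this]
    exact pow_le_pow_left₀ (abs_nonneg _) hlog n
  have hwx := hC x hx0
  have hnorm : ‖Glog w n x‖ = |Real.log x| ^ n * ‖w x‖ := by
    rw [Glog, norm_smul, Real.norm_eq_abs, abs_pow]
  have h2 : ‖Glog w n x‖ ≤ x ^ ((-(n:ℝ))) * (C * x ^ ((-(-(⌈-b⌉ + n)) : ℤ) : ℝ)) := by
    rw [hnorm]
    exact mul_le_mul hlogn hwx (norm_nonneg _) (Real.rpow_nonneg hx0.le _)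
  have h3 : x ^ ((-(n:ℝ))) * (C * x ^ ((-(-(⌈-b⌉ + n)) : ℤ) : ℝ)) = C * x ^ ((⌈-b⌉ : ℤ) : ℝ) := by
    rw [← mul_assoc, mul_comm (x ^ (-(n:ℝ))) C, mul_assoc, ← Real.rpow_add hx0]
    norm_num
  have h4 : x ^ ((⌈-b⌉ : ℤ) : ℝ) ≤ x ^ (-b) := by
    apply Real.rpow_le_rpow_of_exponent_ge hx0 hx1.le
    exact Int.le_ceil (-b)
  have h5 : ‖x ^ (-b)‖ = x ^ (-b) := Real.norm_of_nonneg (Real.rpow_nonneg hx0.le _)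
  rw [h5]
  calc ‖Glog w n x‖ ≤ C * x ^ ((⌈-b⌉ : ℤ) : ℝ) := by rw [← h3]; exact h2
    _ ≤ C * x ^ (-b) := mul_le_mul_of_nonneg_left h4 hC0

lemma Glog_locInt {w : ℝ → ℂ} (hw : IsStrongSchwartz w) (n : ℕ) :
    MeasureTheory.LocallyIntegrableOn (Glog w n) (Set.Ioi 0) := by
  apply ContinuousOn.locallyIntegrableOn _ measurableSet_Ioi
  apply ContinuousOn.smul (f := fun t : ℝ => Real.log t ^ n) _ hw.1.continuousOn
  exact (Real.continuousOn_log.mono (fun x hx => ne_of_gt hx)).pow n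

lemma Glog_key {w : ℝ → ℂ} (hw : IsStrongSchwartz w) (n : ℕ) (s : ℂ) :
    MellinConvergent (Glog w (n+1)) s ∧
      HasDerivAt (mellin (Glog w n)) (mellin (Glog w (n+1)) s) s := by
  have heq : (fun t => Real.log t • Glog w n t) = Glog w (n+1) := by
    funext t
    rw [Glog, Glog, smul_smul, ← pow_succ']
  have h := mellin_hasDerivAt_of_isBigO_rpow (Glog_locInt hw n)
    (Glog_top hw n (s.re + 1)) (by linarith)
    (Glog_bot hw n (s.re - 1)) (by linarith)
  rw [heq] at h
  exact h

lemma Glog_zero (w : ℝ → ℂ) : Glog w 0 = w := by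
  funext t; rw [Glog, pow_zero, one_smul]

lemma mellinT_eq_mellin (w : ℝ → ℂ) : mellinT w = mellin w := by
  funext s
  rw [mellinT, mellin]
  apply MeasureTheory.setIntegral_congr_fun measurableSet_Ioi
  intro x hx
  have hx0 : (x:ℂ) ≠ 0 := by
    exact_mod_cast ne_of_gt (show (0:ℝ) < x from hx)
  simp only [smul_eq_mul]
  rw [Complex.cpow_sub _ _ hx0, Complex.cpow_one]
  ring

lemma Glog_integrand {w : ℝ → ℂ} (lam : ℂ) (j : ℕ) :
    Set.EqOn (fun t : ℝ => (t:ℂ) ^ (lam - 1) • Glog w j t)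
      (fun y : ℝ => w y * (y : ℂ) ^ lam * (Real.log y : ℂ) ^ j / (y : ℂ)) (Set.Ioi 0) := by
  intro t ht
  have ht0 : (t:ℂ) ≠ 0 := by
    exact_mod_cast ne_of_gt (show (0:ℝ) < t from ht)
  simp only [Glog]
  rw [Complex.real_smul, Complex.ofReal_pow, smul_eq_mul,
    Complex.cpow_sub _ _ ht0, Complex.cpow_one]
  ring

/-- for `w ∈ 𝐒(ℝ₊ˣ)`, `M(w)` is entire and its `j`-th derivative at `λ`
equals `∫₀^∞ w(y) y^{λ} (log y)^j dy/y`, the integral converging absolutely. -/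
theorem mellin_derivatives (w : ℝ → ℂ) (hw : IsStrongSchwartz w) :
    Differentiable ℂ (mellinT w) ∧
    ∀ (lam : ℂ) (j : ℕ),
      MeasureTheory.IntegrableOn
        (fun y : ℝ => w y * (y : ℂ) ^ lam * (Real.log y : ℂ) ^ j / (y : ℂ)) (Set.Ioi 0) ∧
      iteratedDeriv j (mellinT w) lam =
        ∫ y in Set.Ioi (0:ℝ), w y * (y : ℂ) ^ lam * (Real.log y : ℂ) ^ j / (y : ℂ) := by
  have hT : mellinT w = mellin (Glog w 0) := by rw [Glog_zero, mellinT_eq_mellin]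
  have hconv : ∀ (j : ℕ) (s : ℂ), MellinConvergent (Glog w j) s := by
    intro j s
    cases j with
    | zero =>
        exact mellinConvergent_of_isBigO_rpow (Glog_locInt hw 0)
          (Glog_top hw 0 (s.re + 1)) (by linarith)
          (Glog_bot hw 0 (s.re - 1)) (by linarith)
    | succ n => exact (Glog_key hw n s).1
  have hiter : ∀ j : ℕ, iteratedDeriv j (mellin (Glog w 0)) = mellin (Glog w j) := by
    intro j
    induction j with
    | zero => rw [iteratedDeriv_zero]
    | succ n ih =>
        rw [iteratedDeriv_succ, ih]
        funext s
        exact (Glog_key hw n s).2.deriv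
  constructor
  · rw [hT]
    intro s
    exact (Glog_key hw 0 s).2.differentiableAt
  · intro lam j
    constructor
    · exact (hconv j lam).congr_fun (Glog_integrand lam j) measurableSet_Ioi
    · rw [hT, hiter j, mellin]
      exact MeasureTheory.setIntegral_congr_fun measurableSet_Ioi (Glog_integrand lam j)
end
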